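/- arXiv:2004.10622 — 12 statements merged into one kernel-verified Lean document; each statement's English description precedes it below -/
import Mathlib

section
/- Let r ≥ 1 be a real number and set u = e^r. Then the Lebesgue measure of the set Ω_r = {(x,y,z) ∈ ℝ³ : |x| ≤ u + r, |y| ≤ u + r, |z| ≤ r, and (|x| − r)·(|y| − r) ≤ u} is at most 72·r²·e^r. -/
open MeasureTheory Real Set

/-!
Write `s = |x| - r`, `t = |y| - r` and `u = e^r`. Where `s ≤ r` or `t ≤ r` the region lies in two boxes
of volume `O(r² u)`. On the hyperbolic part `s, t > r`, `s t ≤ u`, slice `s` dyadically: on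
`r 2^k ≤ s < r 2^(k+1)` one has `t ≤ u / (r 2^k)`, so each slice has volume `8 r u`, and only
`O(r)` slices are nonempty because `r² 2^k < s t ≤ u < 2^⌈2r⌉`.
-/

lemma volume_abs_preimage_Icc_le (a b : ℝ) :
    volume (abs ⁻¹' Icc a b : Set ℝ) ≤ ENNReal.ofReal (2 * (b - a)) := by
  have hsub : (abs ⁻¹' Icc a b : Set ℝ) ⊆ Icc (-b) (-a) ∪ Icc a b := by
    intro x ⟨hax, hxb⟩
    rcases le_or_gt 0 x with hx | hx
    · rw [abs_of_nonneg hx] at hax hxb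
      exact Or.inr ⟨hax, hxb⟩
    · rw [abs_of_neg hx] at hax hxb
      exact Or.inl ⟨by linarith, by linarith⟩
  calc volume (abs ⁻¹' Icc a b : Set ℝ)
      ≤ volume (Icc (-b) (-a)) + volume (Icc a b) := (measure_mono hsub).trans (measure_union_le _ _)
    _ = ENNReal.ofReal (2 * (b - a)) := by
      rw [Real.volume_Icc, Real.volume_Icc, ENNReal.ofReal_mul zero_le_two, neg_sub_neg,
        ENNReal.ofReal_ofNat, two_mul]

def absBox (I J L : Set ℝ) : Set (ℝ × ℝ × ℝ) :=
  (abs ⁻¹' I) ×ˢ (abs ⁻¹' J) ×ˢ (abs ⁻¹' L)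

lemma volume_absBox_Icc_le {a₁ b₁ a₂ b₂ : ℝ} (h₁ : a₁ ≤ b₁) (h₂ : a₂ ≤ b₂) (a₃ b₃ : ℝ) :
    volume (absBox (Icc a₁ b₁) (Icc a₂ b₂) (Icc a₃ b₃)) ≤
      ENNReal.ofReal (8 * ((b₁ - a₁) * (b₂ - a₂) * (b₃ - a₃))) := by
  rw [absBox, Measure.volume_eq_prod, Measure.prod_prod, Measure.volume_eq_prod, Measure.prod_prod]
  calc volume (abs ⁻¹' Icc a₁ b₁ : Set ℝ) *
        (volume (abs ⁻¹' Icc a₂ b₂ : Set ℝ) * volume (abs ⁻¹' Icc a₃ b₃ : Set ℝ))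
      ≤ ENNReal.ofReal (2 * (b₁ - a₁)) *
        (ENNReal.ofReal (2 * (b₂ - a₂)) * ENNReal.ofReal (2 * (b₃ - a₃))) := by
        gcongr <;> exact volume_abs_preimage_Icc_le _ _
    _ = ENNReal.ofReal (8 * ((b₁ - a₁) * (b₂ - a₂) * (b₃ - a₃))) := by
        rw [← ENNReal.ofReal_mul (by linarith), ← ENNReal.ofReal_mul (by linarith)]
        ring_nf

def hyperbolicSlab (r u : ℝ) : Set (ℝ × ℝ × ℝ) :=
  {p | |p.1| ≤ u + r ∧ |p.2.1| ≤ u + r ∧ |p.2.2| ≤ r ∧ (|p.1| - r) * (|p.2.1| - r) ≤ u}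

lemma hyperbolicSlab_subset {r u : ℝ} {K : ℕ} (hr : 0 < r) (hK : u < r ^ 2 * 2 ^ K) :
    hyperbolicSlab r u ⊆
      absBox (Icc 0 (2 * r)) (Icc 0 (u + r)) (Icc 0 r) ∪
      absBox (Icc 0 (u + r)) (Icc 0 (2 * r)) (Icc 0 r) ∪
      ⋃ k ∈ Finset.range K,
        absBox (Icc (r + r * 2 ^ k) (r + r * 2 ^ (k + 1))) (Icc r (r + u / (r * 2 ^ k))) (Icc 0 r) := by
  rintro ⟨x, y, z⟩ ⟨hx, hy, hz, hxy⟩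
  have hz' : |z| ∈ Icc 0 r := ⟨abs_nonneg z, hz⟩
  by_cases hxr : |x| ≤ 2 * r
  · exact Or.inl (Or.inl ⟨⟨abs_nonneg x, hxr⟩, ⟨abs_nonneg y, hy⟩, hz'⟩)
  by_cases hyr : |y| ≤ 2 * r
  · exact Or.inl (Or.inr ⟨⟨abs_nonneg x, hx⟩, ⟨abs_nonneg y, hyr⟩, hz'⟩)
  rw [not_le] at hxr hyr
  obtain ⟨k, hk_le, hk_lt⟩ :=
    exists_nat_pow_near (x := (|x| - r) / r) (by rw [one_le_div hr]; linarith) one_lt_two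
  rw [le_div_iff₀ hr] at hk_le
  rw [div_lt_iff₀ hr] at hk_lt
  have hyu : (|y| - r) * (r * 2 ^ k) ≤ u := by
    nlinarith [mul_le_mul_of_nonneg_left hk_le (by linarith : 0 ≤ |y| - r)]
  have hkK : k < K := by
    have : r ^ 2 * 2 ^ k < r ^ 2 * 2 ^ K := by nlinarith
    exact (pow_lt_pow_iff_right₀ one_lt_two).mp (lt_of_mul_lt_mul_left this (by positivity))
  refine Or.inr (mem_biUnion (Finset.mem_range.mpr hkK) ⟨⟨?_, ?_⟩, ⟨?_, ?_⟩, hz'⟩)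
  · linarith
  · linarith
  · linarith
  · have := (le_div_iff₀ (by positivity)).mpr hyu
    linarith

lemma volume_hyperbolicSlab_le {r u : ℝ} {K : ℕ} (hr : 0 < r) (hu : 0 ≤ u)
    (hK : u < r ^ 2 * 2 ^ K) :
    volume (hyperbolicSlab r u) ≤ ENNReal.ofReal (32 * r ^ 2 * (u + r) + K * (8 * r * u)) := by
  have hbox : ∀ k : ℕ, volume (absBox (Icc (r + r * 2 ^ k) (r + r * 2 ^ (k + 1)))
      (Icc r (r + u / (r * 2 ^ k))) (Icc 0 r)) ≤ ENNReal.ofReal (8 * r * u) := fun k =>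
    (volume_absBox_Icc_le (by gcongr <;> norm_num) (le_add_of_nonneg_right (by positivity)) _ _).trans_eq
      (by congr 1; field_simp; ring)
  have hA := volume_absBox_Icc_le (by positivity : 0 ≤ 2 * r) (by positivity : 0 ≤ u + r) 0 r
  have hB := volume_absBox_Icc_le (by positivity : 0 ≤ u + r) (by positivity : 0 ≤ 2 * r) 0 r
  calc volume (hyperbolicSlab r u)
      ≤ ENNReal.ofReal (16 * r ^ 2 * (u + r)) + ENNReal.ofReal (16 * r ^ 2 * (u + r)) +
          ∑ _k ∈ Finset.range K, ENNReal.ofReal (8 * r * u) := by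
        refine (measure_mono (hyperbolicSlab_subset hr hK)).trans ?_
        refine (measure_union_le _ _).trans (add_le_add ((measure_union_le _ _).trans ?_) ?_)
        · refine add_le_add (hA.trans_eq ?_) (hB.trans_eq ?_) <;> congr 1 <;> ring
        · exact (measure_biUnion_finset_le _ _).trans (Finset.sum_le_sum fun k _ => hbox k)
    _ = ENNReal.ofReal (32 * r ^ 2 * (u + r) + K * (8 * r * u)) := by
        rw [Finset.sum_const, Finset.card_range, nsmul_eq_mul, ← ENNReal.ofReal_natCast,
          ← ENNReal.ofReal_mul (by positivity), ← ENNReal.ofReal_add (by positivity) (by positivity),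
          ← ENNReal.ofReal_add (by positivity) (by positivity)]
        ring_nf

lemma exp_lt_two_pow_ceil {r : ℝ} (hr : 0 < r) : exp r < 2 ^ ⌈2 * r⌉₊ :=
  calc exp r < exp (2 * r * log 2) := exp_lt_exp.2 (by nlinarith [log_two_gt_d9])
    _ = 2 ^ (2 * r) := by rw [rpow_def_of_pos two_pos]; ring_nf
    _ ≤ 2 ^ (⌈2 * r⌉₊ : ℝ) := rpow_le_rpow_of_exponent_le one_le_two (Nat.le_ceil _)
    _ = 2 ^ ⌈2 * r⌉₊ := rpow_natCast _ _

theorem sol_volume_bound (r : ℝ) (hr : 1 ≤ r) :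
    volume {p : ℝ × ℝ × ℝ |
      |p.1| ≤ Real.exp r + r ∧ |p.2.1| ≤ Real.exp r + r ∧ |p.2.2| ≤ r ∧
      (|p.1| - r) * (|p.2.1| - r) ≤ Real.exp r} ≤
    ENNReal.ofReal (72 * r ^ 2 * Real.exp r) := by
  have hr0 : 0 < r := by linarith
  have hK : exp r < r ^ 2 * 2 ^ ⌈2 * r⌉₊ :=
    (exp_lt_two_pow_ceil hr0).trans_le (le_mul_of_one_le_left (by positivity) (one_le_pow₀ hr))
  have hK_le : (⌈2 * r⌉₊ : ℝ) ≤ 3 * r := by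
    linarith [Nat.ceil_lt_add_one (by positivity : 0 ≤ 2 * r)]
  have h2r : 2 * r ≤ exp r := by nlinarith [quadratic_le_exp_of_nonneg hr0.le]
  refine (volume_hyperbolicSlab_le hr0 (exp_pos r).le hK).trans (ENNReal.ofReal_le_ofReal ?_)
  nlinarith [mul_le_mul_of_nonneg_right hK_le (by positivity : 0 ≤ 8 * r * exp r),
    mul_le_mul_of_nonneg_left h2r (by positivity : 0 ≤ 16 * r ^ 2)]
end

section
/- Let γ = (x,y,z) : ℝ → ℝ³ be a differentiable curve satisfying γ'(t) = Σ(γ(t)) for all t, where Σ(x,y,z) = (xz, −yz, −x² + y²). Assume x(0)² + y(0)² + z(0)² = 1, x(0)·y(0) ≠ 0, and 2·|x(0)·y(0)| < 1. Set α = √(|x(0)·y(0)|) and L_α = (4/√(1 + 2α²)) · K((1 − 2α²)/(1 + 2α²)). Then γ is L_α-periodic: γ(t + L_α) = γ(t) for all t ∈ ℝ. -/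
/-!
Along the flow `xy` and `x² + y² + z²` are conserved, so `w = z' = y² - x²` satisfies
`w' = 2z³ - 2z` and `w² = (a² - z²)(b² - z²)` with `a² = 1 - 2α²`, `b² = 1 + 2α²`. The curve
`(a sin ψ, a cos ψ √(b² - a² sin² ψ))`, with `ψ' = √(b² - a² sin² ψ)`, solves the same
Duffing system and passes through `(z(0), w(0))`, so by uniqueness `z(t) = a sin ψ(t + τ)`.
Since `ψ` advances by `π` in time `T = ∫₀^π dθ / √(b² - a² sin² θ) = L_α / 2`, `z` is
`T`-antiperiodic. Finally `x = x(0) exp ∫₀ᵗ z` with `∫₀^{2T} z = 0`, and `y = x(0) y(0) / x`.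
-/

open Real

/-- The complete elliptic integral of the first kind,
`K(m) = ∫₀^{π/2} (1 - m sin²θ)^{-1/2} dθ`. -/
noncomputable def ellipticK (m : ℝ) : ℝ :=
  ∫ θ in (0:ℝ)..(Real.pi / 2), (1 - m * Real.sin θ ^ 2) ^ (-(1 / 2) : ℝ)

open Function Filter

theorem Function.Periodic.exists_surjective_hasDerivAt_comp {g : ℝ → ℝ} {p : ℝ}
    (hper : Periodic g p) (hp : 0 < p) (hg : Continuous g) (hpos : ∀ θ, 0 < g θ) :
    ∃ ψ : ℝ → ℝ, Surjective ψ ∧ (∀ t, HasDerivAt ψ (g (ψ t)) t) ∧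
      ∀ t, ψ (t + ∫ θ in 0..p, (g θ)⁻¹) = ψ t + p := by
  have hcont : Continuous fun θ => (g θ)⁻¹ := hg.inv₀ fun θ => (hpos θ).ne'
  have hint : ∀ u v, IntervalIntegrable (fun θ => (g θ)⁻¹) MeasureTheory.volume u v :=
    fun u v => hcont.intervalIntegrable u v
  set Φ : ℝ → ℝ := fun t => ∫ θ in 0..t, (g θ)⁻¹
  have hΦ : ∀ t, HasDerivAt Φ (g t)⁻¹ t := fun t =>
    (hcont.integral_hasStrictDerivAt 0 t).hasDerivAt
  have hinvper : Periodic (fun θ => (g θ)⁻¹) p := fun θ => by simp only [hper θ]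
  have hsurj : Surjective Φ :=
    Continuous.surjective (continuous_iff_continuousAt.2 fun t => (hΦ t).continuousAt)
      (hinvper.tendsto_atTop_intervalIntegral_of_pos' (hint 0 p) (fun θ => inv_pos.2 (hpos θ)) hp)
      (hinvper.tendsto_atBot_intervalIntegral_of_pos' (hint 0 p) (fun θ => inv_pos.2 (hpos θ)) hp)
  let e : ℝ ≃o ℝ := StrictMono.orderIsoOfSurjective Φ
    (strictMono_of_hasDerivAt_pos hΦ fun θ => inv_pos.2 (hpos θ)) hsurj
  refine ⟨e.symm, e.symm.surjective, fun t => ?_, fun t => ?_⟩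
  · simpa using HasDerivAt.of_local_left_inverse e.symm.continuous.continuousAt (hΦ (e.symm t))
      (inv_ne_zero (hpos _).ne') (Eventually.of_forall e.apply_symm_apply)
  · rw [OrderIso.symm_apply_eq]
    show t + Φ p = Φ (e.symm t + p)
    rw [show Φ (e.symm t + p) = Φ (e.symm t) + Φ (0 + p) from
      hinvper.intervalIntegral_add_eq_add 0 _ hint, zero_add]
    exact congrArg (· + Φ p) (e.apply_symm_apply t).symm

theorem Function.Antiperiodic.intervalIntegral_two_mul_eq_zero {f : ℝ → ℝ} {T : ℝ}
    (hf : Antiperiodic f T) (hc : Continuous f) : ∫ x in 0..2 * T, f x = 0 := by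
  have hshift : ∫ x in T..2 * T, f x = -∫ x in 0..T, f x := by
    simpa [two_mul, hf _, intervalIntegral.integral_neg] using
      (intervalIntegral.integral_comp_add_right f T (a := 0) (b := T)).symm
  rw [← intervalIntegral.integral_add_adjacent_intervals (hc.intervalIntegrable 0 T)
    (hc.intervalIntegrable T _), hshift, add_neg_cancel]

theorem eq_mul_exp_integral_of_hasDerivAt {u z : ℝ → ℝ} (hz : Continuous z)
    (hu : ∀ t, HasDerivAt u (u t * z t) t) (t : ℝ) :
    u t = u 0 * exp (∫ s in 0..t, z s) := by
  set P : ℝ → ℝ := fun t => ∫ s in 0..t, z s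
  have hP : ∀ t, HasDerivAt P (z t) t := fun t => (hz.integral_hasStrictDerivAt 0 t).hasDerivAt
  have hconst : ∀ t, HasDerivAt (fun t => u t * exp (-P t)) 0 t := fun t =>
    ((hu t).mul (hP t).neg.exp).congr_deriv (by ring)
  have h := is_const_of_deriv_eq_zero (fun t => (hconst t).differentiableAt)
    (fun t => (hconst t).deriv) t 0
  simp only [P, intervalIntegral.integral_same, neg_zero, exp_zero, mul_one, exp_neg] at h
  rw [← h, inv_mul_cancel_right₀ (exp_pos _).ne']

theorem Function.Periodic.of_hasDerivAt_mul {u z : ℝ → ℝ} {L : ℝ} (hz : Periodic z L)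
    (hc : Continuous z) (hzero : ∫ s in 0..L, z s = 0) (hu : ∀ t, HasDerivAt u (u t * z t) t) :
    Periodic u L := fun t => by
  rw [eq_mul_exp_integral_of_hasDerivAt hc hu, eq_mul_exp_integral_of_hasDerivAt hc hu t,
    hz.intervalIntegral_add_eq_add 0 t fun a b => hc.intervalIntegrable a b, zero_add, hzero,
    add_zero]

theorem eq_of_hasDerivAt_of_mem_closedBall {E : Type*} [NormedAddCommGroup E] [NormedSpace ℝ E]
    [FiniteDimensional ℝ E] {v : E → E} (hv : ContDiff ℝ 1 v) {f g : ℝ → E} {R t₀ : ℝ}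
    (hf : ∀ t, HasDerivAt f (v (f t)) t) (hg : ∀ t, HasDerivAt g (v (g t)) t)
    (hfR : ∀ t, f t ∈ Metric.closedBall 0 R) (hgR : ∀ t, g t ∈ Metric.closedBall 0 R)
    (h₀ : f t₀ = g t₀) : f = g := by
  obtain ⟨K, hK⟩ := (hv.locallyLipschitz.locallyLipschitzOn (s := Metric.closedBall 0 R)
    ).exists_lipschitzOnWith_of_compact (isCompact_closedBall 0 R)
  exact ODE_solution_unique_univ (v := fun _ => v) (s := fun _ => Metric.closedBall 0 R)
    (fun _ => hK) (fun t => ⟨hf t, hfR t⟩) (fun t => ⟨hg t, hgR t⟩) h₀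

theorem exists_cos_sin_eq {c s : ℝ} (h : c ^ 2 + s ^ 2 = 1) : ∃ θ, cos θ = c ∧ sin θ = s := by
  have hnorm : ‖(⟨c, s⟩ : ℂ)‖ = 1 := by
    rw [Complex.norm_def, Complex.normSq_mk, ← sq, ← sq, h, sqrt_one]
  have hne : (⟨c, s⟩ : ℂ) ≠ 0 := fun h0 => by simp [h0] at hnorm
  exact ⟨Complex.arg ⟨c, s⟩, by rw [Complex.cos_arg hne, hnorm, div_one],
    by rw [Complex.sin_arg, hnorm, div_one]⟩

noncomputable def ellipticSpeed (a b θ : ℝ) : ℝ := √(b ^ 2 - a ^ 2 * sin θ ^ 2)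

def duffingField (p : ℝ × ℝ) : ℝ × ℝ := (p.2, 2 * p.1 ^ 3 - 2 * p.1)

/-- The energy level `w² = (a² - z²)(b² - z²)` of the Duffing system `z' = w, w' = 2z³ - 2z`,
parametrized by `z = a sin θ`. -/
noncomputable def duffingOrbit (a b θ : ℝ) : ℝ × ℝ := (a * sin θ, a * cos θ * ellipticSpeed a b θ)

section

variable {a b : ℝ}

theorem continuous_ellipticSpeed : Continuous (ellipticSpeed a b) := by
  unfold ellipticSpeed; fun_prop

theorem ellipticSpeed_periodic : Periodic (ellipticSpeed a b) π := fun θ => by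
  simp only [ellipticSpeed, sin_add_pi, neg_sq]

theorem sub_mul_sin_sq_pos (hab : a ^ 2 < b ^ 2) (θ : ℝ) : 0 < b ^ 2 - a ^ 2 * sin θ ^ 2 := by
  nlinarith [sin_sq_le_one θ, sq_nonneg a]

theorem ellipticSpeed_pos (hab : a ^ 2 < b ^ 2) (θ : ℝ) : 0 < ellipticSpeed a b θ :=
  sqrt_pos.2 (sub_mul_sin_sq_pos hab θ)

theorem ellipticSpeed_sq (hab : a ^ 2 < b ^ 2) (θ : ℝ) :
    ellipticSpeed a b θ ^ 2 = b ^ 2 - a ^ 2 * sin θ ^ 2 :=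
  sq_sqrt (sub_mul_sin_sq_pos hab θ).le

theorem ellipticSpeed_le (hb : 0 ≤ b) (θ : ℝ) : ellipticSpeed a b θ ≤ b :=
  sqrt_le_iff.2 ⟨hb, by nlinarith [sq_nonneg (a * sin θ)]⟩

theorem inv_ellipticSpeed_eq (hb : 0 < b) (hab : a ^ 2 < b ^ 2) (θ : ℝ) :
    (ellipticSpeed a b θ)⁻¹ = b⁻¹ * (1 - a ^ 2 / b ^ 2 * sin θ ^ 2) ^ (-(1 / 2) : ℝ) := by
  have hfactor : b ^ 2 - a ^ 2 * sin θ ^ 2 = b ^ 2 * (1 - a ^ 2 / b ^ 2 * sin θ ^ 2) := by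
    field_simp
  have hpos : 0 ≤ 1 - a ^ 2 / b ^ 2 * sin θ ^ 2 := by
    have := sub_mul_sin_sq_pos hab θ
    rw [hfactor] at this
    exact (pos_of_mul_pos_right this (sq_nonneg b)).le
  rw [ellipticSpeed, hfactor, sqrt_mul (sq_nonneg b), sqrt_sq hb.le, mul_inv, rpow_neg hpos,
    sqrt_eq_rpow]

theorem integral_inv_ellipticSpeed (hb : 0 < b) (hab : a ^ 2 < b ^ 2) :
    ∫ θ in 0..π, (ellipticSpeed a b θ)⁻¹ = 2 / b * ellipticK (a ^ 2 / b ^ 2) := by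
  have hint : ∀ u v, IntervalIntegrable (fun θ => (ellipticSpeed a b θ)⁻¹)
      MeasureTheory.volume u v := fun u v =>
    (continuous_ellipticSpeed.inv₀ fun θ => (ellipticSpeed_pos hab θ).ne').intervalIntegrable u v
  have hreflect : ∫ θ in π / 2..π, (ellipticSpeed a b θ)⁻¹ =
      ∫ θ in 0..π / 2, (ellipticSpeed a b θ)⁻¹ := by
    have := intervalIntegral.integral_comp_sub_left (fun θ => (ellipticSpeed a b θ)⁻¹) π
      (a := 0) (b := π / 2)
    simp only [ellipticSpeed, sin_pi_sub, sub_zero, sub_half] at this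
    exact this.symm
  rw [← intervalIntegral.integral_add_adjacent_intervals (hint 0 (π / 2)) (hint _ π), hreflect,
    ellipticK, ← intervalIntegral.integral_const_mul]
  simp only [inv_ellipticSpeed_eq hb hab, intervalIntegral.integral_const_mul]
  ring

theorem hasDerivAt_duffingOrbit_comp (hab : a ^ 2 < b ^ 2) (h2 : a ^ 2 + b ^ 2 = 2)
    {ψ : ℝ → ℝ} (hψ : ∀ t, HasDerivAt ψ (ellipticSpeed a b (ψ t)) t) (t : ℝ) :
    HasDerivAt (fun t => duffingOrbit a b (ψ t)) (duffingField (duffingOrbit a b (ψ t))) t := by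
  have hsin : HasDerivAt (fun t => sin (ψ t)) (cos (ψ t) * ellipticSpeed a b (ψ t)) t :=
    (hasDerivAt_sin _).comp t (hψ t)
  have hcos : HasDerivAt (fun t => cos (ψ t)) (-sin (ψ t) * ellipticSpeed a b (ψ t)) t :=
    (hasDerivAt_cos _).comp t (hψ t)
  have hspeed : HasDerivAt (fun t => ellipticSpeed a b (ψ t))
      (-(a ^ 2 * sin (ψ t) * cos (ψ t))) t := by
    have hg := ellipticSpeed_pos hab (ψ t)
    refine (((hsin.pow 2).const_mul (a ^ 2)).const_sub (b ^ 2)).sqrt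
      (sub_mul_sin_sq_pos hab _).ne' |>.congr_deriv ?_
    simp only [ellipticSpeed, Pi.pow_apply] at hg ⊢
    field_simp
    push_cast
    ring
  refine (hsin.const_mul a).prodMk ((hcos.const_mul a).mul hspeed) |>.congr_deriv ?_
  simp only [duffingOrbit, duffingField, Prod.mk.injEq]
  refine ⟨by ring, ?_⟩
  linear_combination -(a * sin (ψ t)) * (ellipticSpeed_sq hab (ψ t) + h2) -
    a ^ 3 * sin (ψ t) * sin_sq_add_cos_sq (ψ t)

theorem duffingOrbit_mem_closedBall (ha : 0 ≤ a) (hb : 0 ≤ b) (hab : a ^ 2 ≤ b ^ 2)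
    (h2 : a ^ 2 + b ^ 2 = 2) (θ : ℝ) : duffingOrbit a b θ ∈ Metric.closedBall 0 1 := by
  have hg : 0 ≤ ellipticSpeed a b θ := sqrt_nonneg _
  have hgb := ellipticSpeed_le (a := a) hb θ
  rw [mem_closedBall_zero_iff, norm_prod_le_iff]
  simp only [duffingOrbit, Real.norm_eq_abs, abs_mul, abs_of_nonneg ha, abs_of_nonneg hg]
  constructor
  · nlinarith [abs_sin_le_one θ]
  · nlinarith [sq_nonneg (a - b), mul_le_mul (abs_cos_le_one θ) hgb hg zero_le_one]

theorem exists_duffingOrbit_eq (ha : a ≠ 0) {z w : ℝ} (hz : z ^ 2 < b ^ 2)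
    (hw : w ^ 2 = (a ^ 2 - z ^ 2) * (b ^ 2 - z ^ 2)) : ∃ θ, duffingOrbit a b θ = (z, w) := by
  have hr : 0 < √(b ^ 2 - z ^ 2) := sqrt_pos.2 (by linarith)
  obtain ⟨θ, hcos, hsin⟩ := exists_cos_sin_eq (c := w / (a * √(b ^ 2 - z ^ 2))) (s := z / a) (by
    have hne : b ^ 2 - z ^ 2 ≠ 0 := by linarith
    rw [div_pow, div_pow, mul_pow, sq_sqrt (by linarith), hw]
    field_simp
    ring)
  refine ⟨θ, Prod.ext (by simp [duffingOrbit, hsin, mul_div_cancel₀ _ ha]) ?_⟩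
  simp only [duffingOrbit, ellipticSpeed, hsin, hcos, mul_div_cancel₀ _ ha]
  field_simp

end

theorem structureFlow_sq_add_sq_add_sq {x y z : ℝ → ℝ} (hx : ∀ t, HasDerivAt x (x t * z t) t)
    (hy : ∀ t, HasDerivAt y (-(y t * z t)) t) (hz : ∀ t, HasDerivAt z (-(x t) ^ 2 + (y t) ^ 2) t)
    (t : ℝ) : x t ^ 2 + y t ^ 2 + z t ^ 2 = x 0 ^ 2 + y 0 ^ 2 + z 0 ^ 2 := by
  have h : ∀ t, HasDerivAt (fun t => x t ^ 2 + y t ^ 2 + z t ^ 2) 0 t := fun t =>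
    ((((hx t).pow 2).add ((hy t).pow 2)).add ((hz t).pow 2)).congr_deriv (by push_cast; ring)
  exact is_const_of_deriv_eq_zero (fun t => (h t).differentiableAt) (fun t => (h t).deriv) t 0

theorem structureFlow_mul {x y z : ℝ → ℝ} (hx : ∀ t, HasDerivAt x (x t * z t) t)
    (hy : ∀ t, HasDerivAt y (-(y t * z t)) t) (t : ℝ) : x t * y t = x 0 * y 0 := by
  have h : ∀ t, HasDerivAt (fun t => x t * y t) 0 t := fun t =>
    ((hx t).mul (hy t)).congr_deriv (by ring)
  exact is_const_of_deriv_eq_zero (fun t => (h t).differentiableAt) (fun t => (h t).deriv) t 0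

theorem structureFlow_hasDerivAt_duffing {x y z : ℝ → ℝ} (hx : ∀ t, HasDerivAt x (x t * z t) t)
    (hy : ∀ t, HasDerivAt y (-(y t * z t)) t) (hz : ∀ t, HasDerivAt z (-(x t) ^ 2 + (y t) ^ 2) t)
    (hS : ∀ t, x t ^ 2 + y t ^ 2 + z t ^ 2 = 1) (t : ℝ) :
    HasDerivAt (fun t => (z t, -(x t) ^ 2 + y t ^ 2))
      (duffingField (z t, -(x t) ^ 2 + y t ^ 2)) t := by
  refine (hz t).prodMk ((((hx t).pow 2).neg.add ((hy t).pow 2)).congr_deriv ?_)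
  linear_combination (-2 * z t) * hS t

theorem structureFlow_mem_closedBall {x y z : ℝ → ℝ} (hS : ∀ t, x t ^ 2 + y t ^ 2 + z t ^ 2 = 1)
    (t : ℝ) : (z t, -(x t) ^ 2 + y t ^ 2) ∈ Metric.closedBall 0 1 := by
  rw [mem_closedBall_zero_iff, norm_prod_le_iff, Real.norm_eq_abs, Real.norm_eq_abs, abs_le,
    abs_le]
  have := hS t
  refine ⟨⟨?_, ?_⟩, ?_, ?_⟩ <;> nlinarith [sq_nonneg (x t), sq_nonneg (y t), sq_nonneg (z t)]

theorem contDiff_duffingField : ContDiff ℝ 1 duffingField := by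
  unfold duffingField; fun_prop

theorem structureFlow_antiperiodic {x y z : ℝ → ℝ} {a b : ℝ}
    (hx : ∀ t, HasDerivAt x (x t * z t) t) (hy : ∀ t, HasDerivAt y (-(y t * z t)) t)
    (hz : ∀ t, HasDerivAt z (-(x t) ^ 2 + (y t) ^ 2) t) (hS : ∀ t, x t ^ 2 + y t ^ 2 + z t ^ 2 = 1)
    (ha : 0 < a) (hb : 0 ≤ b) (hab : a ^ 2 < b ^ 2) (h2 : a ^ 2 + b ^ 2 = 2)
    (henergy : (-(x 0) ^ 2 + y 0 ^ 2) ^ 2 = (a ^ 2 - z 0 ^ 2) * (b ^ 2 - z 0 ^ 2)) :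
    Antiperiodic z (∫ θ in 0..π, (ellipticSpeed a b θ)⁻¹) := by
  obtain ⟨ψ, hψsurj, hψ, hψT⟩ := ellipticSpeed_periodic.exists_surjective_hasDerivAt_comp pi_pos
    continuous_ellipticSpeed (ellipticSpeed_pos hab)
  obtain ⟨θ₀, hθ₀⟩ := exists_duffingOrbit_eq ha.ne'
    (by nlinarith [hS 0, sq_nonneg (x 0), sq_nonneg (y 0)]) henergy
  obtain ⟨τ, rfl⟩ := hψsurj θ₀
  have horbit : (fun t => (z t, -(x t) ^ 2 + y t ^ 2)) = fun t => duffingOrbit a b (ψ (t + τ)) :=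
    eq_of_hasDerivAt_of_mem_closedBall (t₀ := 0) contDiff_duffingField
      (structureFlow_hasDerivAt_duffing hx hy hz hS)
      (hasDerivAt_duffingOrbit_comp hab h2 fun t => (hψ (t + τ)).comp_add_const t τ)
      (structureFlow_mem_closedBall hS)
      (fun t => duffingOrbit_mem_closedBall ha.le hb hab.le h2 _)
      (by rw [zero_add, hθ₀])
  have hzψ t : z t = a * sin (ψ (t + τ)) := congrArg Prod.fst (congrFun horbit t)
  intro t
  rw [hzψ, hzψ, add_right_comm, hψT, sin_add_pi, mul_neg]

theorem structure_flow_periodic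
    (x y z : ℝ → ℝ)
    (hx : ∀ t, HasDerivAt x (x t * z t) t)
    (hy : ∀ t, HasDerivAt y (-(y t * z t)) t)
    (hz : ∀ t, HasDerivAt z (-(x t) ^ 2 + (y t) ^ 2) t)
    (hsph : x 0 ^ 2 + y 0 ^ 2 + z 0 ^ 2 = 1)
    (hne : x 0 * y 0 ≠ 0)
    (hsmall : 2 * |x 0 * y 0| < 1) :
    ∀ t : ℝ,
      x (t + (4 / Real.sqrt (1 + 2 * Real.sqrt |x 0 * y 0| ^ 2)) *
          ellipticK ((1 - 2 * Real.sqrt |x 0 * y 0| ^ 2) /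
            (1 + 2 * Real.sqrt |x 0 * y 0| ^ 2))) = x t ∧
      y (t + (4 / Real.sqrt (1 + 2 * Real.sqrt |x 0 * y 0| ^ 2)) *
          ellipticK ((1 - 2 * Real.sqrt |x 0 * y 0| ^ 2) /
            (1 + 2 * Real.sqrt |x 0 * y 0| ^ 2))) = y t ∧
      z (t + (4 / Real.sqrt (1 + 2 * Real.sqrt |x 0 * y 0| ^ 2)) *
          ellipticK ((1 - 2 * Real.sqrt |x 0 * y 0| ^ 2) /
            (1 + 2 * Real.sqrt |x 0 * y 0| ^ 2))) = z t := by
  set c := |x 0 * y 0|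
  have hc0 : 0 < c := abs_pos.2 hne
  have ha2 : √(1 - 2 * c) ^ 2 = 1 - 2 * c := sq_sqrt (by linarith)
  have hb2 : √(1 + 2 * c) ^ 2 = 1 + 2 * c := sq_sqrt (by linarith)
  have hL : 4 / √(1 + 2 * √c ^ 2) * ellipticK ((1 - 2 * √c ^ 2) / (1 + 2 * √c ^ 2)) =
      2 * ∫ θ in 0..π, (ellipticSpeed √(1 - 2 * c) √(1 + 2 * c) θ)⁻¹ := by
    rw [sq_sqrt hc0.le, integral_inv_ellipticSpeed (sqrt_pos.2 (by linarith)) (by linarith), ha2,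
      hb2]
    ring
  rw [hL]
  set T := ∫ θ in 0..π, (ellipticSpeed √(1 - 2 * c) √(1 + 2 * c) θ)⁻¹
  have hS t : x t ^ 2 + y t ^ 2 + z t ^ 2 = 1 :=
    (structureFlow_sq_add_sq_add_sq hx hy hz t).trans hsph
  have hanti := structureFlow_antiperiodic (a := √(1 - 2 * c)) (b := √(1 + 2 * c)) hx hy hz hS
    (sqrt_pos.2 (by linarith)) (sqrt_nonneg _) (by linarith) (by linarith) (by
      rw [ha2, hb2]
      linear_combination (x 0 ^ 2 + y 0 ^ 2 + 1 - z 0 ^ 2) * hsph + 4 * sq_abs (x 0 * y 0))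
  have hzc : Continuous z := continuous_iff_continuousAt.2 fun t => (hz t).continuousAt
  have hxper : Periodic x (2 * T) := hanti.periodic_two_mul.of_hasDerivAt_mul hzc
    (hanti.intervalIntegral_two_mul_eq_zero hzc) hx
  refine fun t => ⟨hxper t, ?_, hanti.periodic_two_mul t⟩
  have hxy := (structureFlow_mul hx hy (t + 2 * T)).trans (structureFlow_mul hx hy t).symm
  rw [hxper t] at hxy
  exact mul_left_cancel₀ (left_ne_zero_of_mul ((structureFlow_mul hx hy t).trans_ne hne)) hxy
end

section
/- With K(m) = ∫₀^{π/2} (1 − m·sin²θ)^{−1/2} dθ, one has lim_{m → 1⁻} ( K(m) + (1/2)·log((1 − m)/16) ) = 0; that is, K(m) − log(4/√(1 − m)) tends to 0 as m tends to 1 from below. -/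
open Real Filter

/-!
With `ε = 1 - m`, the substitution `v = √ε tan θ` gives
`K(m) = ∫₀^∞ dv / (√(1 + v²) √(ε + v²))`. The logarithmic singularity comes from `(0, 1]`, where
`∫₀¹ dv / √(ε + v²) = log (1 + √(1 + ε)) - ½ log ε` exactly. After subtracting it, the integrand
is bounded by `1` on `(0, 1]` and by `v⁻²` on `(1, ∞)` uniformly in `ε ≥ 0`, so dominated
convergence lets `ε → 0`; the limits `log 2 - log (1 + √2)`, `log (1 + √2)` and `log 2` add up
to `2 log 2 = ½ log 16`.
-/

open MeasureTheory Set Topology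

lemma image_tan_Ioo_zero_pi_div_two : tan '' Ioo 0 (π / 2) = Ioi 0 := by
  refine Subset.antisymm ?_ fun v hv =>
    ⟨arctan v, ⟨arctan_pos.2 hv, arctan_lt_pi_div_two v⟩, tan_arctan v⟩
  rintro _ ⟨θ, hθ, rfl⟩
  exact tan_pos_of_pos_of_lt_pi_div_two hθ.1 hθ.2

lemma continuousAt_inv_sqrt_add {ε₀ c : ℝ} (h : 0 < ε₀ + c) :
    ContinuousAt (fun ε => (√(ε + c))⁻¹) ε₀ :=
  ((continuous_sqrt.comp (continuous_add_const c)).continuousAt).inv₀ (sqrt_pos.2 h).ne'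

lemma continuous_inv_sqrt_add_sq {c : ℝ} (hc : 0 < c) :
    Continuous fun v : ℝ => (√(c + v ^ 2))⁻¹ :=
  (continuous_const.add (continuous_pow 2)).sqrt.inv₀ fun v =>
    (sqrt_pos.2 (add_pos_of_pos_of_nonneg hc (sq_nonneg v))).ne'

lemma integral_Ioc_inv_sqrt_add_sq {ε : ℝ} (hε : 0 < ε) :
    ∫ v in Ioc 0 1, (√(ε + v ^ 2))⁻¹ = log (1 + √(ε + 1)) - log ε / 2 := by
  have hderiv : ∀ v ∈ uIcc (0 : ℝ) 1,
      HasDerivAt (fun x => log (x + √(ε + x ^ 2))) (√(ε + v ^ 2))⁻¹ v := by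
    intro v hv
    rw [uIcc_of_le zero_le_one] at hv
    have hsum : 0 < v + √(ε + v ^ 2) := add_pos_of_nonneg_of_pos hv.1 (sqrt_pos.2 (by positivity))
    refine (((hasDerivAt_id' v).add (((hasDerivAt_pow 2 v).const_add ε).sqrt
      (by positivity))).log hsum.ne').congr_deriv ?_
    simp only [Pi.add_apply]
    field_simp
    ring
  rw [← intervalIntegral.integral_of_le zero_le_one,
    intervalIntegral.integral_eq_sub_of_hasDerivAt hderiv
      ((continuous_inv_sqrt_add_sq hε).intervalIntegrable 0 1)]
  simp [log_sqrt hε.le]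

namespace EllipticK

noncomputable def kernel (ε v : ℝ) : ℝ := (√(1 + v ^ 2))⁻¹ * (√(ε + v ^ 2))⁻¹

lemma ellipticK_one_sub_eq_integral_kernel {ε : ℝ} (hε : 0 < ε) :
    ellipticK (1 - ε) = ∫ v in Ioi 0, kernel ε v := by
  have hs : Ioo 0 (π / 2) ⊆ Ioo (-(π / 2)) (π / 2) :=
    Ioo_subset_Ioo_left (by linarith [pi_pos])
  have himage : (fun θ => √ε * tan θ) '' Ioo 0 (π / 2) = Ioi 0 := by
    rw [← image_image (√ε * ·), image_tan_Ioo_zero_pi_div_two,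
      image_const_mul_Ioi_zero (sqrt_pos.2 hε)]
  have hderiv : ∀ θ ∈ Ioo 0 (π / 2),
      HasDerivWithinAt (fun θ => √ε * tan θ) (√ε / cos θ ^ 2) (Ioo 0 (π / 2)) θ := by
    intro θ hθ
    simpa only [mul_one_div] using
      ((hasDerivAt_tan_of_mem_Ioo (hs hθ)).const_mul √ε).hasDerivWithinAt
  have hinj : InjOn (fun θ => √ε * tan θ) (Ioo 0 (π / 2)) :=
    fun x hx y hy h => injOn_tan (hs hx) (hs hy) (mul_left_cancel₀ (sqrt_pos.2 hε).ne' h)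
  rw [ellipticK, intervalIntegral.integral_of_le (by positivity), integral_Ioc_eq_integral_Ioo,
    ← himage, integral_image_eq_integral_abs_deriv_smul measurableSet_Ioo hderiv hinj]
  refine setIntegral_congr_fun measurableSet_Ioo fun θ hθ => ?_
  have hcos : 0 < cos θ := cos_pos_of_mem_Ioo (hs hθ)
  set D := 1 - (1 - ε) * sin θ ^ 2
  have hD : 0 < D := by nlinarith [sin_sq_add_cos_sq θ, sq_nonneg (sin θ)]
  have h1 : 1 + (√ε * tan θ) ^ 2 = D / cos θ ^ 2 := by
    rw [mul_pow, sq_sqrt hε.le, tan_eq_sin_div_cos]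
    field_simp
    linear_combination sin_sq_add_cos_sq θ
  have h2 : ε + (√ε * tan θ) ^ 2 = ε / cos θ ^ 2 := by
    rw [mul_pow, sq_sqrt hε.le, tan_eq_sin_div_cos]
    field_simp
    linear_combination sin_sq_add_cos_sq θ
  have hsD : 0 < √D := sqrt_pos.2 hD
  have hsε : 0 < √ε := sqrt_pos.2 hε
  rw [kernel, h1, h2, sqrt_div hD.le, sqrt_div hε.le, sqrt_sq hcos.le, rpow_neg hD.le,
    ← sqrt_eq_rpow, abs_of_pos (by positivity), smul_eq_mul]
  field_simp

lemma kernel_nonneg (ε v : ℝ) : 0 ≤ kernel ε v := by unfold kernel; positivity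

lemma kernel_le_rpow_neg_two {ε v : ℝ} (hε : 0 ≤ ε) (hv : 0 < v) :
    kernel ε v ≤ v ^ (-2 : ℝ) := by
  have h1 : v ≤ √(1 + v ^ 2) := le_sqrt_of_sq_le (by linarith)
  have h2 : v ≤ √(ε + v ^ 2) := le_sqrt_of_sq_le (by linarith)
  rw [kernel, rpow_neg hv.le, ← mul_inv, rpow_two]
  exact inv_anti₀ (by positivity) ((sq v).trans_le (mul_le_mul h1 h2 hv.le (sqrt_nonneg _)))

lemma abs_kernel_sub_inv_sqrt_le_one {ε v : ℝ} (hε : 0 ≤ ε) (hv : 0 < v) :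
    |kernel ε v - (√(ε + v ^ 2))⁻¹| ≤ 1 := by
  set s := √(1 + v ^ 2)
  have hs1 : 1 ≤ s := one_le_sqrt.2 (by nlinarith)
  have hsv : s ≤ 1 + v := sqrt_le_iff.2 ⟨by linarith, by nlinarith⟩
  have ha : (√(ε + v ^ 2))⁻¹ ≤ v⁻¹ := inv_anti₀ hv (le_sqrt_of_sq_le (by linarith))
  have hs : 1 - s⁻¹ ≤ v := by
    rw [sub_le_iff_le_add, ← sub_le_iff_le_add', inv_eq_one_div, le_div_iff₀ (by positivity)]
    nlinarith
  have hs0 : 0 ≤ 1 - s⁻¹ := sub_nonneg.2 (inv_le_one_of_one_le₀ hs1)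
  rw [kernel, show s⁻¹ * (√(ε + v ^ 2))⁻¹ - (√(ε + v ^ 2))⁻¹
      = -((√(ε + v ^ 2))⁻¹ * (1 - s⁻¹)) by ring, abs_neg, abs_of_nonneg (by positivity)]
  calc (√(ε + v ^ 2))⁻¹ * (1 - s⁻¹) ≤ v⁻¹ * v := mul_le_mul ha hs hs0 (by positivity)
    _ = 1 := inv_mul_cancel₀ hv.ne'

lemma continuousAt_kernel {ε₀ v : ℝ} (h : 0 < ε₀ + v ^ 2) :
    ContinuousAt (fun ε => kernel ε v) ε₀ :=
  continuousAt_const.mul (continuousAt_inv_sqrt_add h)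

lemma continuous_kernel {ε : ℝ} (hε : 0 < ε) : Continuous (kernel ε) :=
  (continuous_inv_sqrt_add_sq one_pos).mul (continuous_inv_sqrt_add_sq hε)

lemma measurable_kernel (ε : ℝ) : Measurable (kernel ε) := by
  unfold kernel
  fun_prop

lemma integrableOn_Ioi_one_kernel {ε : ℝ} (hε : 0 ≤ ε) : IntegrableOn (kernel ε) (Ioi 1) := by
  refine (integrableOn_Ioi_rpow_of_lt (by norm_num : (-2 : ℝ) < -1) one_pos).mono'
    (measurable_kernel ε).aestronglyMeasurable ?_
  filter_upwards [ae_restrict_mem measurableSet_Ioi] with v hv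
  rw [norm_of_nonneg (kernel_nonneg ε v)]
  exact kernel_le_rpow_neg_two hε (one_pos.trans hv)

lemma integral_Ioc_kernel_zero_sub :
    ∫ v in Ioc 0 1, (kernel 0 v - (√(0 + v ^ 2))⁻¹) = log 2 - log (1 + √2) := by
  have hcont : ContinuousOn (fun x : ℝ => -log (1 + √(1 + x ^ 2))) (Icc 0 1) := by
    refine (Continuous.continuousOn ?_).neg
    exact (continuous_const.add (continuous_const.add (continuous_pow 2)).sqrt).log
      fun x => (by positivity : (0 : ℝ) < 1 + √(1 + x ^ 2)).ne'
  have hderiv : ∀ v ∈ Ioo (0 : ℝ) 1, HasDerivAt (fun x => -log (1 + √(1 + x ^ 2)))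
      (kernel 0 v - (√(0 + v ^ 2))⁻¹) v := by
    intro v hv
    refine (((((hasDerivAt_pow 2 v).const_add 1).sqrt (by positivity)).const_add 1).log
      (by positivity)).neg.congr_deriv ?_
    rw [kernel, zero_add, sqrt_sq hv.1.le]
    field_simp
    rw [eq_div_iff hv.1.ne']
    norm_num
    linear_combination 2 * sq_sqrt (by positivity : (0 : ℝ) ≤ 1 + v ^ 2)
  have hint : IntervalIntegrable (fun v => kernel 0 v - (√(0 + v ^ 2))⁻¹) volume 0 1 := by
    refine (intervalIntegrable_const (c := (1 : ℝ))).mono_fun'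
      ((measurable_kernel 0).sub (by fun_prop)).aestronglyMeasurable ?_
    rw [uIoc_of_le zero_le_one]
    filter_upwards [ae_restrict_mem measurableSet_Ioc] with v hv
    exact abs_kernel_sub_inv_sqrt_le_one le_rfl hv.1
  rw [← intervalIntegral.integral_of_le zero_le_one,
    intervalIntegral.integral_eq_sub_of_hasDerivAt_of_le zero_le_one hcont hderiv hint]
  norm_num
  ring

lemma integral_Ioi_one_kernel_zero : ∫ v in Ioi 1, kernel 0 v = log (1 + √2) := by
  have hderiv : ∀ v ∈ Ioi (1 : ℝ), HasDerivAt (fun x => -arsinh x⁻¹) (kernel 0 v) v := by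
    intro v hv
    have hv0 : 0 < v := one_pos.trans hv
    refine ((hasDerivAt_arsinh v⁻¹).comp v (hasDerivAt_inv hv0.ne')).neg.congr_deriv ?_
    have hsqrt : √(1 + v⁻¹ ^ 2) = √(1 + v ^ 2) / v := by
      rw [show 1 + v⁻¹ ^ 2 = (1 + v ^ 2) / v ^ 2 by field_simp; ring, sqrt_div (by positivity),
        sqrt_sq hv0.le]
    rw [kernel, zero_add, sqrt_sq hv0.le, hsqrt]
    field_simp
  have hlim : Tendsto (fun x : ℝ => -arsinh x⁻¹) atTop (𝓝 0) := by
    simpa using ((continuous_arsinh.tendsto 0).comp tendsto_inv_atTop_zero).neg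
  rw [integral_Ioi_of_hasDerivAt_of_tendsto
    (continuous_arsinh.continuousAt.comp (continuousAt_inv₀ one_ne_zero)).neg.continuousWithinAt
    hderiv (integrableOn_Ioi_one_kernel le_rfl) hlim]
  norm_num [arsinh]

lemma continuousWithinAt_integral_Ioc_kernel_sub :
    ContinuousWithinAt (fun ε => ∫ v in Ioc 0 1, (kernel ε v - (√(ε + v ^ 2))⁻¹)) (Ici 0) 0 := by
  refine tendsto_integral_filter_of_dominated_convergence (fun _ => 1)
    (.of_forall fun ε => ((measurable_kernel ε).sub (by fun_prop)).aestronglyMeasurable)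
    ?_ (integrableOn_const measure_Ioc_lt_top.ne) ?_
  · filter_upwards [self_mem_nhdsWithin] with ε hε
    filter_upwards [ae_restrict_mem measurableSet_Ioc] with v hv
    exact abs_kernel_sub_inv_sqrt_le_one hε hv.1
  · filter_upwards [ae_restrict_mem measurableSet_Ioc] with v hv
    have hv2 : 0 < 0 + v ^ 2 := by nlinarith [hv.1]
    exact ((continuousAt_kernel hv2).sub (continuousAt_inv_sqrt_add hv2)).continuousWithinAt

lemma continuousWithinAt_integral_Ioi_one_kernel :
    ContinuousWithinAt (fun ε => ∫ v in Ioi 1, kernel ε v) (Ici 0) 0 := by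
  refine tendsto_integral_filter_of_dominated_convergence (fun v => v ^ (-2 : ℝ))
    (Eventually.of_forall fun ε => (measurable_kernel ε).aestronglyMeasurable)
    ?_ (integrableOn_Ioi_rpow_of_lt (by norm_num) one_pos) ?_
  · filter_upwards [self_mem_nhdsWithin] with ε hε
    filter_upwards [ae_restrict_mem measurableSet_Ioi] with v hv
    rw [norm_of_nonneg (kernel_nonneg ε v)]
    exact kernel_le_rpow_neg_two hε (one_pos.trans hv)
  · filter_upwards [ae_restrict_mem measurableSet_Ioi] with v hv
    have hv0 : (0 : ℝ) < v := one_pos.trans hv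
    exact (continuousAt_kernel (by positivity : (0 : ℝ) < 0 + v ^ 2)).continuousWithinAt

lemma ellipticK_one_sub_add_half_log {ε : ℝ} (hε : 0 < ε) :
    ellipticK (1 - ε) + 1 / 2 * log (ε / 16) =
      (∫ v in Ioc 0 1, (kernel ε v - (√(ε + v ^ 2))⁻¹)) + (∫ v in Ioi 1, kernel ε v)
        + log (1 + √(ε + 1)) - 2 * log 2 := by
  have hIoc : IntegrableOn (kernel ε) (Ioc 0 1) := (continuous_kernel hε).integrableOn_Ioc
  rw [ellipticK_one_sub_eq_integral_kernel hε, ← Ioc_union_Ioi_eq_Ioi zero_le_one,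
    setIntegral_union (Ioc_disjoint_Ioi le_rfl) measurableSet_Ioi hIoc
      (integrableOn_Ioi_one_kernel hε.le),
    integral_sub hIoc (continuous_inv_sqrt_add_sq hε).integrableOn_Ioc,
    integral_Ioc_inv_sqrt_add_sq hε, log_div hε.ne' (by norm_num),
    show (16 : ℝ) = 2 ^ 4 by norm_num, log_pow]
  ring

lemma tendsto_ellipticK_one_sub_add_half_log :
    Tendsto (fun ε => ellipticK (1 - ε) + 1 / 2 * log (ε / 16)) (𝓝[>] 0) (𝓝 0) := by
  have hIoc : Tendsto (fun ε => ∫ v in Ioc 0 1, (kernel ε v - (√(ε + v ^ 2))⁻¹)) (𝓝[>] 0)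
      (𝓝 (log 2 - log (1 + √2))) := by
    rw [← integral_Ioc_kernel_zero_sub]
    exact continuousWithinAt_integral_Ioc_kernel_sub.mono Ioi_subset_Ici_self
  have hIoi : Tendsto (fun ε => ∫ v in Ioi 1, kernel ε v) (𝓝[>] 0) (𝓝 (log (1 + √2))) := by
    rw [← integral_Ioi_one_kernel_zero]
    exact continuousWithinAt_integral_Ioi_one_kernel.mono Ioi_subset_Ici_self
  have hlog : Tendsto (fun ε => log (1 + √(ε + 1))) (𝓝[>] 0) (𝓝 (log 2)) := by
    have h : ContinuousAt (fun ε => log (1 + √(ε + 1))) 0 :=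
      ((continuous_const.add (continuous_add_const 1).sqrt).continuousAt).log
        (by positivity : (0 : ℝ) < 1 + √(0 + 1)).ne'
    convert h.continuousWithinAt.tendsto using 2
    norm_num
  have h := ((hIoc.add hIoi).add hlog).sub_const (2 * log 2)
  rw [show log 2 - log (1 + √2) + log (1 + √2) + log 2 - 2 * log 2 = 0 by ring] at h
  exact h.congr' (eventually_nhdsWithin_of_forall fun ε hε =>
    (ellipticK_one_sub_add_half_log hε).symm)

end EllipticK

theorem ellipticK_log_asymptotic :
    Filter.Tendsto (fun m : ℝ => ellipticK m + (1 / 2) * Real.log ((1 - m) / 16))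
      (nhdsWithin 1 (Set.Iio 1)) (nhds 0) := by
  have hsub : Tendsto (fun m : ℝ => 1 - m) (𝓝[<] 1) (𝓝[>] 0) := by
    refine tendsto_nhdsWithin_iff.2
      ⟨?_, eventually_nhdsWithin_of_forall fun m hm => mem_Ioi.2 (sub_pos.2 hm)⟩
    simpa using ((continuous_sub_left (1 : ℝ)).tendsto 1).mono_left nhdsWithin_le_nhds
  simpa [Function.comp_def] using EllipticK.tendsto_ellipticK_one_sub_add_half_log.comp hsub
end

section
/- Let r > 0. Let z : [0,r] → ℝ be continuous and let x, y, a, b : [0,r] → ℝ be differentiable with x' = −xz, y' = yz, a' = 2x + az, b' = 2y − bz on [0,r], and a(0) = b(0) = 0. Then a(r)·x(r) = ∫₀^r 2·x(t)² dt and b(r)·y(r) = ∫₀^r 2·y(t)² dt. -/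
/-!
By the product rule, `(a x)' = (2x + az) x - a x z = 2x²`, so the fundamental theorem of calculus
and `a(0) = 0` give the formula for `a r * x r`. The pair `(b, y)` satisfies the same system
with `z` replaced by `-z`.
-/

open Set

theorem intervalIntegral.integral_eq_sub_of_hasDerivWithinAt_Icc {E : Type*}
    [NormedAddCommGroup E] [NormedSpace ℝ E] [CompleteSpace E] {f f' : ℝ → E} {a b : ℝ}
    (hab : a ≤ b) (hf : ∀ t ∈ Icc a b, HasDerivWithinAt f (f' t) (Icc a b) t)
    (hf' : ContinuousOn f' (Icc a b)) :
    ∫ t in a..b, f' t = f b - f a :=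
  integral_eq_sub_of_hasDerivAt_of_le hab (fun t ht => (hf t ht).continuousWithinAt)
    (fun t ht => (hf t (Ioo_subset_Icc_self ht)).hasDerivAt (Icc_mem_nhds ht.1 ht.2))
    (hf'.intervalIntegrable_of_Icc hab)

theorem hasDerivWithinAt_mul_of_linear_system {a u : ℝ → ℝ} {s : Set ℝ} {t w : ℝ}
    (ha : HasDerivWithinAt a (2 * u t + a t * w) s t)
    (hu : HasDerivWithinAt u (-(u t * w)) s t) :
    HasDerivWithinAt (fun τ => a τ * u τ) (2 * u t ^ 2) s t :=
  (ha.mul hu).congr_deriv (by ring)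

theorem integral_two_mul_sq_eq_mul {r : ℝ} (hr : 0 ≤ r) {a u w : ℝ → ℝ}
    (ha : ∀ t ∈ Icc 0 r, HasDerivWithinAt a (2 * u t + a t * w t) (Icc 0 r) t)
    (hu : ∀ t ∈ Icc 0 r, HasDerivWithinAt u (-(u t * w t)) (Icc 0 r) t) (ha0 : a 0 = 0) :
    a r * u r = ∫ t in (0:ℝ)..r, 2 * u t ^ 2 := by
  have hu_cont : ContinuousOn u (Icc 0 r) := fun t ht => (hu t ht).continuousWithinAt
  rw [intervalIntegral.integral_eq_sub_of_hasDerivWithinAt_Icc hr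
    (fun t ht => hasDerivWithinAt_mul_of_linear_system (ha t ht) (hu t ht)) (by fun_prop),
    ha0, zero_mul, sub_zero]

theorem ax_by_integral_formula_general
    (r : ℝ) (hr : 0 < r) (x y z a b : ℝ → ℝ)
    (hx : ∀ t ∈ Set.Icc (0:ℝ) r, HasDerivWithinAt x (-(x t * z t)) (Set.Icc 0 r) t)
    (hy : ∀ t ∈ Set.Icc (0:ℝ) r, HasDerivWithinAt y (y t * z t) (Set.Icc 0 r) t)
    (ha : ∀ t ∈ Set.Icc (0:ℝ) r, HasDerivWithinAt a (2 * x t + a t * z t) (Set.Icc 0 r) t)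
    (hb : ∀ t ∈ Set.Icc (0:ℝ) r, HasDerivWithinAt b (2 * y t - b t * z t) (Set.Icc 0 r) t)
    (ha0 : a 0 = 0) (hb0 : b 0 = 0) :
    (a r * x r = ∫ t in (0:ℝ)..r, 2 * x t ^ 2) ∧
    (b r * y r = ∫ t in (0:ℝ)..r, 2 * y t ^ 2) := by
  refine ⟨integral_two_mul_sq_eq_mul hr.le ha hx ha0, ?_⟩
  refine integral_two_mul_sq_eq_mul (w := fun t => -z t) hr.le (fun t ht => ?_) (fun t ht => ?_) hb0
  · simpa only [mul_neg, ← sub_eq_add_neg] using hb t ht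
  · simpa only [mul_neg, neg_neg] using hy t ht

theorem ax_by_integral_formula
    (r : ℝ) (hr : 0 < r) (x y z a b : ℝ → ℝ)
    (hzc : ContinuousOn z (Set.Icc 0 r))
    (hx : ∀ t ∈ Set.Icc (0:ℝ) r, HasDerivWithinAt x (-(x t * z t)) (Set.Icc 0 r) t)
    (hy : ∀ t ∈ Set.Icc (0:ℝ) r, HasDerivWithinAt y (y t * z t) (Set.Icc 0 r) t)
    (ha : ∀ t ∈ Set.Icc (0:ℝ) r, HasDerivWithinAt a (2 * x t + a t * z t) (Set.Icc 0 r) t)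
    (hb : ∀ t ∈ Set.Icc (0:ℝ) r, HasDerivWithinAt b (2 * y t - b t * z t) (Set.Icc 0 r) t)
    (ha0 : a 0 = 0) (hb0 : b 0 = 0) :
    (a r * x r = ∫ t in (0:ℝ)..r, 2 * x t ^ 2) ∧
    (b r * y r = ∫ t in (0:ℝ)..r, 2 * y t ^ 2) :=
  ax_by_integral_formula_general r hr x y z a b hx hy ha hb ha0 hb0
end

section
/- Let ℓ > 0. Let z : [0,ℓ] → ℝ be continuous and x, y, a, b : [0,ℓ] → ℝ differentiable with x' = −xz, y' = yz, a' = 2x + az, b' = 2y − bz on [0,ℓ] and a(0) = b(0) = 0. Assume the symmetry relations x(ℓ) = y(0), y(ℓ) = x(0), and ∫₀^ℓ x(t)² dt = ∫₀^ℓ y(t)² dt. Then a(ℓ)·y(0) = b(ℓ)·x(0). -/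
/-!
Along the flow, `a x` and `b y` have derivatives `2 x²` and `2 y²`: the terms `± a x z` and
`± b y z` cancel. Integrating over the half-period, `a(ℓ) x(ℓ) = 2 ∫ x²` and `b(ℓ) y(ℓ) = 2 ∫ y²`,
and the symmetry relations turn the equality of these integrals into `a(ℓ) y(0) = b(ℓ) x(0)`.
-/

open Set intervalIntegral

theorem integral_eq_sub_of_hasDerivWithinAt_Icc {f f' : ℝ → ℝ} {t₀ t₁ : ℝ} (h : t₀ ≤ t₁)
    (hf : ∀ t ∈ Icc t₀ t₁, HasDerivWithinAt f (f' t) (Icc t₀ t₁) t)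
    (hf' : IntervalIntegrable f' MeasureTheory.volume t₀ t₁) :
    ∫ t in t₀..t₁, f' t = f t₁ - f t₀ :=
  integral_eq_sub_of_hasDerivAt_of_le h (fun t ht => (hf t ht).continuousWithinAt)
    (fun t ht => (hf t (Ioo_subset_Icc_self ht)).hasDerivAt (Icc_mem_nhds ht.1 ht.2)) hf'

theorem HasDerivWithinAt.mul_of_adjoint {u v : ℝ → ℝ} {s : Set ℝ} {t c z : ℝ}
    (hu : HasDerivWithinAt u (c + u t * z) s t) (hv : HasDerivWithinAt v (-(v t * z)) s t) :
    HasDerivWithinAt (fun t => u t * v t) (c * v t) s t :=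
  (hu.mul hv).congr_deriv (by ring)

theorem mul_sub_mul_eq_integral_of_adjoint {u v z : ℝ → ℝ} {t₀ t₁ : ℝ} (h : t₀ ≤ t₁) (c : ℝ)
    (hu : ∀ t ∈ Icc t₀ t₁, HasDerivWithinAt u (c * v t + u t * z t) (Icc t₀ t₁) t)
    (hv : ∀ t ∈ Icc t₀ t₁, HasDerivWithinAt v (-(v t * z t)) (Icc t₀ t₁) t) :
    u t₁ * v t₁ - u t₀ * v t₀ = c * ∫ t in t₀..t₁, v t ^ 2 := by
  have hv_cont : ContinuousOn v (Icc t₀ t₁) := fun t ht => (hv t ht).continuousWithinAt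
  have hvv_int : IntervalIntegrable (fun t => c * v t * v t) MeasureTheory.volume t₀ t₁ :=
    ((continuousOn_const.mul hv_cont).mul hv_cont).intervalIntegrable_of_Icc h
  rw [← integral_eq_sub_of_hasDerivWithinAt_Icc h
    (fun t ht => (hu t ht).mul_of_adjoint (hv t ht)) hvv_int, ← integral_const_mul]
  simp only [mul_assoc, sq]

theorem reciprocity_at_half_period_general
    (ℓ : ℝ) (hℓ : 0 < ℓ) (x y z a b : ℝ → ℝ)
    (hx : ∀ t ∈ Set.Icc (0:ℝ) ℓ, HasDerivWithinAt x (-(x t * z t)) (Set.Icc 0 ℓ) t)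
    (hy : ∀ t ∈ Set.Icc (0:ℝ) ℓ, HasDerivWithinAt y (y t * z t) (Set.Icc 0 ℓ) t)
    (ha : ∀ t ∈ Set.Icc (0:ℝ) ℓ, HasDerivWithinAt a (2 * x t + a t * z t) (Set.Icc 0 ℓ) t)
    (hb : ∀ t ∈ Set.Icc (0:ℝ) ℓ, HasDerivWithinAt b (2 * y t - b t * z t) (Set.Icc 0 ℓ) t)
    (ha0 : a 0 = 0) (hb0 : b 0 = 0)
    (hxl : x ℓ = y 0) (hyl : y ℓ = x 0)
    (hint : (∫ t in (0:ℝ)..ℓ, x t ^ 2) = ∫ t in (0:ℝ)..ℓ, y t ^ 2) :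
    a ℓ * y 0 = b ℓ * x 0 := by
  have hax : a ℓ * x ℓ = 2 * ∫ t in (0:ℝ)..ℓ, x t ^ 2 := by
    simpa [ha0] using mul_sub_mul_eq_integral_of_adjoint hℓ.le 2 ha hx
  -- `(b, y)` solves the same system as `(a, x)` with `z` replaced by `-z`.
  have hby : b ℓ * y ℓ = 2 * ∫ t in (0:ℝ)..ℓ, y t ^ 2 := by
    simpa [hb0] using mul_sub_mul_eq_integral_of_adjoint (z := fun t => -z t) hℓ.le 2
      (fun t ht => (hb t ht).congr_deriv (by ring)) (fun t ht => (hy t ht).congr_deriv (by ring))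
  rw [← hxl, ← hyl, hax, hby, hint]

theorem reciprocity_at_half_period
    (ℓ : ℝ) (hℓ : 0 < ℓ) (x y z a b : ℝ → ℝ)
    (hzc : ContinuousOn z (Set.Icc 0 ℓ))
    (hx : ∀ t ∈ Set.Icc (0:ℝ) ℓ, HasDerivWithinAt x (-(x t * z t)) (Set.Icc 0 ℓ) t)
    (hy : ∀ t ∈ Set.Icc (0:ℝ) ℓ, HasDerivWithinAt y (y t * z t) (Set.Icc 0 ℓ) t)
    (ha : ∀ t ∈ Set.Icc (0:ℝ) ℓ, HasDerivWithinAt a (2 * x t + a t * z t) (Set.Icc 0 ℓ) t)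
    (hb : ∀ t ∈ Set.Icc (0:ℝ) ℓ, HasDerivWithinAt b (2 * y t - b t * z t) (Set.Icc 0 ℓ) t)
    (ha0 : a 0 = 0) (hb0 : b 0 = 0)
    (hxl : x ℓ = y 0) (hyl : y ℓ = x 0)
    (hint : (∫ t in (0:ℝ)..ℓ, x t ^ 2) = ∫ t in (0:ℝ)..ℓ, y t ^ 2) :
    a ℓ * y 0 = b ℓ * x 0 :=
  reciprocity_at_half_period_general ℓ hℓ x y z a b hx hy ha hb ha0 hb0 hxl hyl hint
end

section
/- Let x, y, z : ℝ → ℝ be continuous functions. Suppose a, b, ā, b̄ : ℝ → ℝ are differentiable and satisfy a' = 2x + az, b' = 2y − bz, ā' = x + āz, b̄' = y − b̄z, with a(0) = b(0) = ā(0) = b̄(0) = 0. Then ā(t) = a(t)/2 and b̄(t) = b(t)/2 for all t ∈ ℝ. -/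
/-!
The deficits `a / 2 - ā` and `b / 2 - b̄` solve the homogeneous linear equations `u' = z u` and
`v' = -z v`, because the inhomogeneous terms `x` and `y` cancel. Multiplying by the integrating
factor `exp (-∫ z)` shows that a solution of such an equation vanishing at one time vanishes
everywhere.
-/

open Real

theorem eq_mul_exp_integral_of_hasDerivAt_mul {f g : ℝ → ℝ} (hg : Continuous g)
    (hf : ∀ t, HasDerivAt f (f t * g t) t) (t₀ t : ℝ) :
    f t = f t₀ * exp (∫ s in t₀..t, g s) := by
  set G : ℝ → ℝ := fun t => ∫ s in t₀..t, g s
  have hG : ∀ s, HasDerivAt G (g s) s := fun s =>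
    intervalIntegral.integral_hasDerivAt_right (hg.intervalIntegrable _ _)
      (hg.stronglyMeasurableAtFilter _ _) hg.continuousAt
  have hderiv : ∀ s, HasDerivAt (fun t => f t * exp (-G t)) 0 s := fun s =>
    ((hf s).fun_mul (hG s).fun_neg.exp).congr_deriv (by ring)
  have hconst : f t * exp (-G t) = f t₀ * exp (-G t₀) :=
    is_const_of_deriv_eq_zero (fun s => (hderiv s).differentiableAt) (fun s => (hderiv s).deriv)
      t t₀
  have hG₀ : G t₀ = 0 := intervalIntegral.integral_same
  rw [hG₀, neg_zero, exp_zero, mul_one] at hconst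
  calc f t = f t * exp (-G t) * exp (G t) := by
        rw [mul_assoc, ← exp_add, neg_add_cancel, exp_zero, mul_one]
    _ = f t₀ * exp (G t) := by rw [hconst]

theorem eq_zero_of_hasDerivAt_mul {f g : ℝ → ℝ} (hg : Continuous g)
    (hf : ∀ t, HasDerivAt f (f t * g t) t) {t₀ : ℝ} (hf₀ : f t₀ = 0) (t : ℝ) : f t = 0 := by
  rw [eq_mul_exp_integral_of_hasDerivAt_mul hg hf t₀ t, hf₀, zero_mul]

theorem doubling_lemma_general
    (x y z a b abar bbar : ℝ → ℝ)
    (hzc : Continuous z)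
    (ha : ∀ t, HasDerivAt a (2 * x t + a t * z t) t)
    (hb : ∀ t, HasDerivAt b (2 * y t - b t * z t) t)
    (habar : ∀ t, HasDerivAt abar (x t + abar t * z t) t)
    (hbbar : ∀ t, HasDerivAt bbar (y t - bbar t * z t) t)
    (ha0 : a 0 = 0) (hb0 : b 0 = 0) (habar0 : abar 0 = 0) (hbbar0 : bbar 0 = 0) :
    ∀ t : ℝ, abar t = a t / 2 ∧ bbar t = b t / 2 := by
  have hu : ∀ t, HasDerivAt (fun t => a t / 2 - abar t) ((a t / 2 - abar t) * z t) t :=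
    fun t => ((ha t).div_const 2).fun_sub (habar t) |>.congr_deriv (by ring)
  have hv : ∀ t, HasDerivAt (fun t => b t / 2 - bbar t) ((b t / 2 - bbar t) * -z t) t :=
    fun t => ((hb t).div_const 2).fun_sub (hbbar t) |>.congr_deriv (by ring)
  have hu0 : a 0 / 2 - abar 0 = 0 := by rw [ha0, habar0]; norm_num
  have hv0 : b 0 / 2 - bbar 0 = 0 := by rw [hb0, hbbar0]; norm_num
  intro t
  have hut := eq_zero_of_hasDerivAt_mul hzc hu hu0 t
  have hvt := eq_zero_of_hasDerivAt_mul hzc.neg hv hv0 t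
  constructor <;> linarith

theorem doubling_lemma
    (x y z a b abar bbar : ℝ → ℝ)
    (hxc : Continuous x) (hyc : Continuous y) (hzc : Continuous z)
    (ha : ∀ t, HasDerivAt a (2 * x t + a t * z t) t)
    (hb : ∀ t, HasDerivAt b (2 * y t - b t * z t) t)
    (habar : ∀ t, HasDerivAt abar (x t + abar t * z t) t)
    (hbbar : ∀ t, HasDerivAt bbar (y t - bbar t * z t) t)
    (ha0 : a 0 = 0) (hb0 : b 0 = 0) (habar0 : abar 0 = 0) (hbbar0 : bbar 0 = 0) :
    ∀ t : ℝ, abar t = a t / 2 ∧ bbar t = b t / 2 :=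
  doubling_lemma_general x y z a b abar bbar hzc ha hb habar hbbar ha0 hb0 habar0 hbbar0
end

section
/- Let x, y, z : ℝ → ℝ be differentiable with x' = −xz, y' = yz, z' = x² − y², and let a, b : ℝ → ℝ be twice differentiable with a' = 2x + az and b' = 2y − bz. Then for all t, a(t)·b''(t) − b(t)·a''(t) = 2·a(t)·b(t)·(y(t)² − x(t)²). -/
/-!
Differentiating the endpoint equations once more and substituting the flow, the terms `±2xz`
cancel and `a`, `b` satisfy the linear equations `a'' = (z² + x² - y²) a` and
`b'' = (z² - x² + y²) b`. In `a b'' - b a''` the common `z²` term then drops out.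
-/

section EndpointSecondDerivative

variable {x y z a b : ℝ → ℝ} {w t : ℝ}

theorem hasDerivAt_endpoint_deriv_a (hx : HasDerivAt x (-(x t * z t)) t) (hz : HasDerivAt z w t)
    (ha : HasDerivAt a (2 * x t + a t * z t) t) :
    HasDerivAt (fun s => 2 * x s + a s * z s) ((z t ^ 2 + w) * a t) t :=
  ((hx.const_mul 2).add (ha.mul hz)).congr_deriv (by ring)

theorem hasDerivAt_endpoint_deriv_b (hy : HasDerivAt y (y t * z t) t) (hz : HasDerivAt z w t)
    (hb : HasDerivAt b (2 * y t - b t * z t) t) :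
    HasDerivAt (fun s => 2 * y s - b s * z s) ((z t ^ 2 - w) * b t) t :=
  ((hy.const_mul 2).sub (hb.mul hz)).congr_deriv (by ring)

end EndpointSecondDerivative

theorem ab_second_derivative_identity
    (x y z a b a'' b'' : ℝ → ℝ)
    (hx : ∀ t, HasDerivAt x (-(x t * z t)) t)
    (hy : ∀ t, HasDerivAt y (y t * z t) t)
    (hz : ∀ t, HasDerivAt z (x t ^ 2 - y t ^ 2) t)
    (ha : ∀ t, HasDerivAt a (2 * x t + a t * z t) t)
    (hb : ∀ t, HasDerivAt b (2 * y t - b t * z t) t)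
    (ha'' : ∀ t, HasDerivAt (fun s => 2 * x s + a s * z s) (a'' t) t)
    (hb'' : ∀ t, HasDerivAt (fun s => 2 * y s - b s * z s) (b'' t) t) :
    ∀ t : ℝ, a t * b'' t - b t * a'' t = 2 * a t * b t * (y t ^ 2 - x t ^ 2) := by
  intro t
  rw [(ha'' t).unique (hasDerivAt_endpoint_deriv_a (hx t) (hz t) (ha t)),
    (hb'' t).unique (hasDerivAt_endpoint_deriv_b (hy t) (hz t) (hb t))]
  ring
end

section
/- Let x, y, z, a, b : ℝ → ℝ be differentiable with x' = −xz, y' = yz, z' = x² − y², a' = 2x + az, b' = 2y − bz, and a(0) = b(0) = z(0) = 0. Then a(t)·x(t) − b(t)·y(t) = 2·z(t) for all t ∈ ℝ. -/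
/-! The quantity `a x - b y - 2 z` has derivative zero along the flow (the terms `a x z` and
`b y z` cancel, and `2 x² - 2 y²` is exactly `2 z'`), and it vanishes at `t = 0`. -/

theorem hasDerivAt_ax_sub_by_sub_two_z {x y z a b : ℝ → ℝ} {t : ℝ}
    (hx : HasDerivAt x (-(x t * z t)) t) (hy : HasDerivAt y (y t * z t) t)
    (hz : HasDerivAt z (x t ^ 2 - y t ^ 2) t) (ha : HasDerivAt a (2 * x t + a t * z t) t)
    (hb : HasDerivAt b (2 * y t - b t * z t) t) :
    HasDerivAt (fun s => a s * x s - b s * y s - 2 * z s) 0 t :=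
  (((ha.mul hx).sub (hb.mul hy)).sub (hz.const_mul 2)).congr_deriv (by ring)

theorem ax_minus_by_eq_two_z
    (x y z a b : ℝ → ℝ)
    (hx : ∀ t, HasDerivAt x (-(x t * z t)) t)
    (hy : ∀ t, HasDerivAt y (y t * z t) t)
    (hz : ∀ t, HasDerivAt z (x t ^ 2 - y t ^ 2) t)
    (ha : ∀ t, HasDerivAt a (2 * x t + a t * z t) t)
    (hb : ∀ t, HasDerivAt b (2 * y t - b t * z t) t)
    (ha0 : a 0 = 0) (hb0 : b 0 = 0) (hz0 : z 0 = 0) :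
    ∀ t : ℝ, a t * x t - b t * y t = 2 * z t := by
  intro t
  have hderiv t := hasDerivAt_ax_sub_by_sub_two_z (hx t) (hy t) (hz t) (ha t) (hb t)
  have hconst := is_const_of_deriv_eq_zero (fun s => (hderiv s).differentiableAt)
    (fun s => (hderiv s).deriv) t 0
  simp only [ha0, hb0, hz0, zero_mul, sub_zero, mul_zero] at hconst
  linarith
end

section
/- Let x, y, z, a, b : ℝ × ℝ → ℝ be twice continuously differentiable functions of (L, t). Suppose that for every (L, t): ∂ₜx = −xz, ∂ₜy = yz, ∂ₜz = x² − y², ∂ₜa = 2x + az, ∂ₜb = 2y − bz, and x² + y² + z² = 1; and suppose a(L, 0) = b(L, 0) = z(L, 0) = 0 for every L. Then 2y·∂_L b − a·∂_L x + b·∂_L y = −2·∂_L z identically on ℝ × ℝ. -/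
/-!
`R = a x - b y - 2 z` is a first integral of the flow which vanishes at `t = 0`, so `R ≡ 0`.
Differentiating the system in `L`, the quantity `P = x ∂_L a + y ∂_L b` satisfies
`∂ₜ P = ∂_L (x² + y² + z²) + R ∂_L z = 0`, and `P = 0` at `t = 0` because
`a (·, 0) = b (·, 0) = 0`. Hence `P ≡ 0`, and the formula is the identity `P - ∂_L R = 0`.
-/

section PartialDerivatives

variable {E : Type*} [NormedAddCommGroup E] [NormedSpace ℝ E] {f : ℝ × ℝ → E}
  {f' : ℝ × ℝ →L[ℝ] E} {L t : ℝ}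

theorem HasFDerivAt.hasDerivAt_slice_fst (hf : HasFDerivAt f f' (L, t)) :
    HasDerivAt (fun M => f (M, t)) (f' (1, 0)) L :=
  hf.comp_hasDerivAt L ((hasDerivAt_id L).prodMk (hasDerivAt_const L t))

theorem HasFDerivAt.hasDerivAt_slice_snd (hf : HasFDerivAt f f' (L, t)) :
    HasDerivAt (fun s => f (L, s)) (f' (0, 1)) t :=
  hf.comp_hasDerivAt t ((hasDerivAt_const t L).prodMk (hasDerivAt_id t))

theorem DifferentiableAt.hasDerivAt_slice_fst (hf : DifferentiableAt ℝ f (L, t)) :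
    HasDerivAt (fun M => f (M, t)) (deriv (fun M => f (M, t)) L) L :=
  hf.hasFDerivAt.hasDerivAt_slice_fst.differentiableAt.hasDerivAt

theorem ContDiff.hasDerivAt_deriv_slice_fst {G : ℝ × ℝ → E} (hf : ContDiff ℝ 2 f)
    (hG : ∀ L t, HasDerivAt (fun s => f (L, s)) (G (L, t)) t) {g' : E}
    (hg' : HasDerivAt (fun M => G (M, t)) g' L) :
    HasDerivAt (fun s => deriv (fun M => f (M, s)) L) g' t := by
  have hf' : ∀ p, HasFDerivAt f (fderiv ℝ f p) p :=
    fun p => (hf.differentiable two_ne_zero p).hasFDerivAt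
  have hf'' : HasFDerivAt (fderiv ℝ f) (fderiv ℝ (fderiv ℝ f) (L, t)) (L, t) :=
    ((hf.fderiv_right le_rfl).differentiable one_ne_zero (L, t)).hasFDerivAt
  have happly : ∀ v, HasFDerivAt (fun p => fderiv ℝ f p v)
      ((ContinuousLinearMap.apply ℝ E v).comp (fderiv ℝ (fderiv ℝ f) (L, t))) (L, t) :=
    fun v => (ContinuousLinearMap.apply ℝ E v).hasFDerivAt.comp (L, t) hf''
  have hG_eq : G = fun p => fderiv ℝ f p (0, 1) :=
    funext fun p => (hG p.1 p.2).unique (hf' p).hasDerivAt_slice_snd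
  have hsymm := hf.contDiffAt.isSymmSndFDerivAt (x := (L, t)) (by simp) (1, 0) (0, 1)
  have hg'_eq : g' = fderiv ℝ (fderiv ℝ f) (L, t) (0, 1) (1, 0) :=
    hsymm ▸ hg'.unique (hG_eq ▸ (happly (0, 1)).hasDerivAt_slice_fst)
  simp only [fun s => ((hf' (L, s)).hasDerivAt_slice_fst).deriv, hg'_eq]
  exact (happly (1, 0)).hasDerivAt_slice_snd

end PartialDerivatives

section SolGeodesicFlow

variable {x y z a b : ℝ → ℝ}

theorem geodesicFlow_first_integral (hx : ∀ t, HasDerivAt x (-(x t * z t)) t)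
    (hy : ∀ t, HasDerivAt y (y t * z t) t) (hz : ∀ t, HasDerivAt z (x t ^ 2 - y t ^ 2) t)
    (ha : ∀ t, HasDerivAt a (2 * x t + a t * z t) t)
    (hb : ∀ t, HasDerivAt b (2 * y t - b t * z t) t)
    (ha0 : a 0 = 0) (hb0 : b 0 = 0) (hz0 : z 0 = 0) (t : ℝ) :
    a t * x t - b t * y t = 2 * z t := by
  have hR_deriv : ∀ s, HasDerivAt (fun s => a s * x s - b s * y s - 2 * z s) 0 s := fun s =>
    ((((ha s).mul (hx s)).sub ((hb s).mul (hy s))).sub ((hz s).const_mul 2)).congr_deriv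
      (by ring)
  have := is_const_of_deriv_eq_zero (fun s => (hR_deriv s).differentiableAt)
    (fun s => (hR_deriv s).deriv) t 0
  simp only [ha0, hb0, hz0] at this
  linear_combination this

/-- `xL, …, bL` stand for the `L`-variations `∂_L x, …, ∂_L b` along a family of solutions. -/
theorem geodesicFlow_variation_first_integral {xL yL zL aL bL : ℝ → ℝ}
    (hx : ∀ t, HasDerivAt x (-(x t * z t)) t) (hy : ∀ t, HasDerivAt y (y t * z t) t)
    (haL : ∀ t, HasDerivAt aL (2 * xL t + (aL t * z t + a t * zL t)) t)
    (hbL : ∀ t, HasDerivAt bL (2 * yL t - (bL t * z t + b t * zL t)) t)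
    (hR : ∀ t, a t * x t - b t * y t = 2 * z t)
    (hS : ∀ t, x t * xL t + y t * yL t + z t * zL t = 0)
    (haL0 : aL 0 = 0) (hbL0 : bL 0 = 0) (t : ℝ) :
    x t * aL t + y t * bL t = 0 := by
  have hP_deriv : ∀ s, HasDerivAt (fun s => x s * aL s + y s * bL s) 0 s := fun s =>
    (((hx s).mul (haL s)).add ((hy s).mul (hbL s))).congr_deriv
      (by linear_combination 2 * hS s + zL s * hR s)
  have := is_const_of_deriv_eq_zero (fun s => (hP_deriv s).differentiableAt)
    (fun s => (hP_deriv s).deriv) t 0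
  simpa [haL0, hbL0] using this

end SolGeodesicFlow

theorem coiculescu_variation_formula
    (x y z a b : ℝ × ℝ → ℝ)
    (hxC : ContDiff ℝ 2 x) (hyC : ContDiff ℝ 2 y) (hzC : ContDiff ℝ 2 z)
    (haC : ContDiff ℝ 2 a) (hbC : ContDiff ℝ 2 b)
    (hxt : ∀ L t : ℝ, HasDerivAt (fun s => x (L, s)) (-(x (L, t) * z (L, t))) t)
    (hyt : ∀ L t : ℝ, HasDerivAt (fun s => y (L, s)) (y (L, t) * z (L, t)) t)
    (hzt : ∀ L t : ℝ, HasDerivAt (fun s => z (L, s)) (x (L, t) ^ 2 - y (L, t) ^ 2) t)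
    (hat : ∀ L t : ℝ, HasDerivAt (fun s => a (L, s)) (2 * x (L, t) + a (L, t) * z (L, t)) t)
    (hbt : ∀ L t : ℝ, HasDerivAt (fun s => b (L, s)) (2 * y (L, t) - b (L, t) * z (L, t)) t)
    (hsph : ∀ L t : ℝ, x (L, t) ^ 2 + y (L, t) ^ 2 + z (L, t) ^ 2 = 1)
    (h0 : ∀ L : ℝ, a (L, 0) = 0 ∧ b (L, 0) = 0 ∧ z (L, 0) = 0) :
    ∀ L t : ℝ,
      2 * y (L, t) * deriv (fun M => b (M, t)) L -
        a (L, t) * deriv (fun M => x (M, t)) L +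
        b (L, t) * deriv (fun M => y (M, t)) L =
      -(2 * deriv (fun M => z (M, t)) L) := by
  intro L t
  have hL : ∀ {f : ℝ × ℝ → ℝ}, ContDiff ℝ 2 f → ∀ s,
      HasDerivAt (fun M => f (M, s)) (deriv (fun M => f (M, s)) L) L :=
    fun hf s => (hf.differentiable two_ne_zero (L, s)).hasDerivAt_slice_fst
  have hR : ∀ L s, a (L, s) * x (L, s) - b (L, s) * y (L, s) = 2 * z (L, s) := fun L =>
    geodesicFlow_first_integral (hxt L) (hyt L) (hzt L) (hat L) (hbt L) (h0 L).1 (h0 L).2.1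
      (h0 L).2.2
  have hRL := fun s => (((hL haC s).mul (hL hxC s)).sub ((hL hbC s).mul (hL hyC s))).unique
    (((hL hzC s).const_mul 2).congr_of_eventuallyEq (.of_forall fun M => hR M s))
  have hSL : ∀ s, x (L, s) * deriv (fun M => x (M, s)) L + y (L, s) * deriv (fun M => y (M, s)) L
      + z (L, s) * deriv (fun M => z (M, s)) L = 0 := fun s => by
    have := ((((hL hxC s).pow 2).add ((hL hyC s).pow 2)).add ((hL hzC s).pow 2)).unique
      ((hasDerivAt_const L 1).congr_of_eventuallyEq (.of_forall fun M => hsph M s))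
    linear_combination this / 2
  have hP := geodesicFlow_variation_first_integral (hxt L) (hyt L)
    (fun s => haC.hasDerivAt_deriv_slice_fst (G := fun p => 2 * x p + a p * z p) hat
      (((hL hxC s).const_mul 2).add ((hL haC s).mul (hL hzC s))))
    (fun s => hbC.hasDerivAt_deriv_slice_fst (G := fun p => 2 * y p - b p * z p) hbt
      (((hL hyC s).const_mul 2).sub ((hL hbC s).mul (hL hzC s))))
    (hR L) hSL (by simp only [(h0 _).1, deriv_const']) (by simp only [(h0 _).2.1, deriv_const'])
  linear_combination hP t - hRL t
end

section
/- Let L > 0 and let z₁, z₂ : ℝ → ℝ be twice differentiable solutions of z'' = −2z + 2z³. Assume z₁(0) = z₂(0) = 0, 0 < z₁'(0) < z₂'(0), z₁(t) > 0 for t ∈ (0, L/2), z₁(L/2) = 0, and z₁(t) < 0 for t ∈ (L/2, L). Then the set {t ∈ (0, L) : z₁(t) = z₂(t)} contains at most one point. -/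
/-!
The difference `z₂ - z₁` leaves `0` upwards, and the conserved energies `z'² + 2z² - z⁴` of the
two solutions differ, so `z₁` and `z₂` can only cross transversally. The Wronskian
`W = z₁ z₂' - z₂ z₁'` vanishes at `0`, equals `z₁ (z₂' - z₁')` at a crossing and satisfies
`W' = 2 z₁ z₂ (z₂² - z₁²)`, which is positive while `z₁, z₂` have the same sign and `|z₂| > |z₁|`.
At the first crossing `a` we have `z₂' < z₁'`, so `W(a) > W(0) = 0` forces `z₁(a) < 0`, i.e.
`a > L/2`. Up to a second crossing `b < L` we then have `z₂ < z₁ < 0`, so `W(b) > W(a) > 0`;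
but `z₂ - z₁` returns to `0` upwards at `b`, which makes `W(b) = z₁(b) (z₂' - z₁')(b) ≤ 0`.
-/

open Set Filter Topology

section FirstZero

variable {f : ℝ → ℝ} {f' a : ℝ}

theorem HasDerivAt.eventually_slope_pos (hf : HasDerivAt f f' a) (h : 0 < f') :
    ∀ᶠ t in 𝓝[≠] a, 0 < slope f a t :=
  (hasDerivAt_iff_tendsto_slope.mp hf).eventually (eventually_gt_nhds h)

theorem HasDerivAt.eventually_pos_nhdsGT (hf : HasDerivAt f f' a) (ha : f a = 0) (h : 0 < f') :
    ∀ᶠ t in 𝓝[>] a, 0 < f t := by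
  filter_upwards [nhdsGT_le_nhdsNE a (hf.eventually_slope_pos h), self_mem_nhdsWithin]
    with t hslope hat
  exact pos_of_slope_pos hat hslope ha

theorem HasDerivAt.eventually_neg_nhdsLT (hf : HasDerivAt f f' a) (ha : f a = 0) (h : 0 < f') :
    ∀ᶠ t in 𝓝[<] a, f t < 0 := by
  filter_upwards [nhdsLT_le_nhdsNE a (hf.eventually_slope_pos h), self_mem_nhdsWithin]
    with t hslope hta
  exact neg_of_slope_pos hta hslope ha

theorem HasDerivAt.nonpos_of_pos_on_Ioo {c : ℝ} (hf : HasDerivAt f f' a) (ha : f a = 0)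
    (hca : c < a) (hpos : ∀ t ∈ Ioo c a, 0 < f t) : f' ≤ 0 := by
  by_contra! h
  obtain ⟨t, hneg, ht⟩ := ((hf.eventually_neg_nhdsLT ha h).and (Ioo_mem_nhdsLT hca)).exists
  exact (hpos t ht).not_gt hneg

theorem Continuous.exists_first_zero (hf : Continuous f) {y : ℝ} (hpos : ∀ᶠ t in 𝓝[>] a, 0 < f t)
    (hay : a < y) (hy : f y = 0) :
    ∃ b ∈ Ioc a y, f b = 0 ∧ ∀ t ∈ Ioo a b, 0 < f t := by
  obtain ⟨c, hac, hc⟩ := mem_nhdsGT_iff_exists_Ioo_subset.1 hpos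
  obtain ⟨p, hap, hpcy⟩ := exists_between (lt_min hac hay)
  obtain ⟨hpc, hpy⟩ := lt_min_iff.1 hpcy
  have hfp : 0 < f p := hc ⟨hap, hpc⟩
  obtain ⟨b, ⟨⟨hpb, hby⟩, hfb⟩, hleast⟩ := (isCompact_Icc.inter_right
    (isClosed_singleton.preimage hf) : IsCompact (Icc p y ∩ f ⁻¹' {0})).exists_isLeast
    ⟨y, ⟨hpy.le, le_rfl⟩, hy⟩
  refine ⟨b, ⟨hap.trans_le hpb, hby⟩, hfb, fun t ⟨hat, htb⟩ => ?_⟩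
  rcases le_or_gt t p with htp | hpt
  · exact hc ⟨hat, htp.trans_lt hpc⟩
  by_contra! hft
  obtain ⟨s, ⟨hps, hst⟩, hfs⟩ :=
    intermediate_value_Icc' hpt.le hf.continuousOn ⟨hft, hfp.le⟩
  exact (hleast ⟨⟨hps, hst.trans (htb.le.trans hby)⟩, hfs⟩).not_gt (hst.trans_lt htb)

theorem exists_first_zero_of_hasDerivAt {f f' : ℝ → ℝ} (hf : ∀ t, HasDerivAt f (f' t) t)
    {a y : ℝ} (ha : f a = 0) (ha' : 0 < f' a) (hay : a < y) (hy : f y = 0) :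
    ∃ b ∈ Ioc a y, f b = 0 ∧ (∀ t ∈ Ioo a b, 0 < f t) ∧ f' b ≤ 0 := by
  have hcont : Continuous f := continuous_iff_continuousAt.2 fun t => (hf t).continuousAt
  obtain ⟨b, hb, hfb, hpos⟩ :=
    hcont.exists_first_zero ((hf a).eventually_pos_nhdsGT ha ha') hay hy
  exact ⟨b, hb, hfb, hpos, (hf b).nonpos_of_pos_on_Ioo hfb hb.1 hpos⟩

end FirstZero

structure IsDuffingSolution (z z' : ℝ → ℝ) : Prop where
  hasDerivAt : ∀ t, HasDerivAt z (z' t) t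
  hasDerivAt_deriv : ∀ t, HasDerivAt z' (-2 * z t + 2 * z t ^ 3) t

def duffingEnergy (z z' : ℝ → ℝ) (t : ℝ) : ℝ := z' t ^ 2 + 2 * z t ^ 2 - z t ^ 4

def wronskian (z₁ z₁' z₂ z₂' : ℝ → ℝ) (t : ℝ) : ℝ := z₁ t * z₂' t - z₂ t * z₁' t

theorem wronskian_of_eq {z₁ z₁' z₂ z₂' : ℝ → ℝ} {t : ℝ} (ht : z₁ t = z₂ t) :
    wronskian z₁ z₁' z₂ z₂' t = z₁ t * (z₂' t - z₁' t) := by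
  rw [wronskian, ← ht]
  ring

namespace IsDuffingSolution

variable {z z' z₁ z₁' z₂ z₂' : ℝ → ℝ}

theorem duffingEnergy_eq (h : IsDuffingSolution z z') (t s : ℝ) :
    duffingEnergy z z' t = duffingEnergy z z' s := by
  have hderiv (t : ℝ) : HasDerivAt (duffingEnergy z z') 0 t := by
    refine ((((h.hasDerivAt_deriv t).pow 2).add (((h.hasDerivAt t).pow 2).const_mul 2)).sub
      ((h.hasDerivAt t).pow 4)).congr_deriv ?_
    push_cast
    ring
  exact is_const_of_deriv_eq_zero (fun t => (hderiv t).differentiableAt) (fun t => (hderiv t).deriv)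
    t s

theorem deriv_ne_of_eq (h₁ : IsDuffingSolution z₁ z₁') (h₂ : IsDuffingSolution z₂ z₂') {s t : ℝ}
    (henergy : duffingEnergy z₁ z₁' s ≠ duffingEnergy z₂ z₂' s) (ht : z₁ t = z₂ t) :
    z₁' t ≠ z₂' t := by
  intro ht'
  rw [← h₁.duffingEnergy_eq t, ← h₂.duffingEnergy_eq t, duffingEnergy, duffingEnergy, ht, ht']
    at henergy
  exact henergy rfl

theorem hasDerivAt_wronskian (h₁ : IsDuffingSolution z₁ z₁') (h₂ : IsDuffingSolution z₂ z₂')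
    (t : ℝ) :
    HasDerivAt (wronskian z₁ z₁' z₂ z₂') (2 * z₁ t * z₂ t * (z₂ t ^ 2 - z₁ t ^ 2)) t := by
  refine (((h₁.hasDerivAt t).mul (h₂.hasDerivAt_deriv t)).sub
    ((h₂.hasDerivAt t).mul (h₁.hasDerivAt_deriv t))).congr_deriv ?_
  ring

theorem wronskian_lt (h₁ : IsDuffingSolution z₁ z₁') (h₂ : IsDuffingSolution z₂ z₂') {a b : ℝ}
    (hab : a < b) (hpos : ∀ t ∈ Ioo a b, 0 < z₁ t * z₂ t * (z₂ t ^ 2 - z₁ t ^ 2)) :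
    wronskian z₁ z₁' z₂ z₂' a < wronskian z₁ z₁' z₂ z₂' b := by
  have hW := hasDerivAt_wronskian h₁ h₂
  refine strictMonoOn_of_hasDerivWithinAt_pos (convex_Icc a b)
    (fun t _ => (hW t).continuousAt.continuousWithinAt) (fun t _ => (hW t).hasDerivWithinAt)
    (fun t ht => ?_) (left_mem_Icc.2 hab.le) (right_mem_Icc.2 hab.le) hab
  rw [interior_Icc] at ht
  linarith [hpos t ht]

theorem lt_of_first_crossing (h₁ : IsDuffingSolution z₁ z₁') (h₂ : IsDuffingSolution z₂ z₂')
    (h₁₀ : z₁ 0 = 0) (h₂₀ : z₂ 0 = 0) {a c : ℝ} (hpos : ∀ t ∈ Ioo 0 c, 0 < z₁ t) (hc : z₁ c = 0)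
    (ha : 0 < a) (hcross : z₁ a = z₂ a) (hbelow : ∀ t ∈ Ioo 0 a, z₁ t < z₂ t)
    (hslope : z₂' a < z₁' a) : c < a := by
  by_contra! hac
  have hW := h₁.wronskian_lt h₂ ha fun t ht => by
    have h₁t := hpos t ⟨ht.1, ht.2.trans_le hac⟩
    have h₁₂t := hbelow t ht
    exact mul_pos (mul_pos h₁t (h₁t.trans h₁₂t)) (by nlinarith)
  have hz₁a : 0 ≤ z₁ a := by
    rcases hac.lt_or_eq with hac | rfl
    exacts [(hpos a ⟨ha, hac⟩).le, hc.ge]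
  rw [wronskian_of_eq hcross, wronskian_of_eq (h₁₀.trans h₂₀.symm), h₁₀, zero_mul] at hW
  exact hW.not_ge (mul_nonpos_of_nonneg_of_nonpos hz₁a (sub_nonpos.2 hslope.le))

theorem deriv_lt_of_crossings_of_neg (h₁ : IsDuffingSolution z₁ z₁')
    (h₂ : IsDuffingSolution z₂ z₂') {a b : ℝ} (hab : a < b) (hcross_a : z₁ a = z₂ a)
    (hcross_b : z₁ b = z₂ b) (hneg : ∀ t ∈ Icc a b, z₁ t < 0)
    (habove : ∀ t ∈ Ioo a b, z₂ t < z₁ t) (hslope : z₂' a < z₁' a) : z₂' b < z₁' b := by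
  have hW := h₁.wronskian_lt h₂ hab fun t ht => by
    have h₁t := hneg t (Ioo_subset_Icc_self ht)
    have h₂₁t := habove t ht
    exact mul_pos (mul_pos_of_neg_of_neg h₁t (h₂₁t.trans h₁t)) (by nlinarith)
  rw [wronskian_of_eq hcross_a, wronskian_of_eq hcross_b] at hW
  have hWa : 0 < z₁ a * (z₂' a - z₁' a) :=
    mul_pos_of_neg_of_neg (hneg a (left_mem_Icc.2 hab.le)) (sub_neg.2 hslope)
  by_contra! hslope_b
  have hWb : z₁ b * (z₂' b - z₁' b) ≤ 0 :=
    mul_nonpos_of_nonpos_of_nonneg (hneg b (right_mem_Icc.2 hab.le)).le (sub_nonneg.2 hslope_b)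
  linarith

end IsDuffingSolution

theorem z_solutions_cross_at_most_once_general
    (L : ℝ) (z₁ z₂ z₁' z₂' : ℝ → ℝ)
    (hz₁ : ∀ t, HasDerivAt z₁ (z₁' t) t)
    (hz₂ : ∀ t, HasDerivAt z₂ (z₂' t) t)
    (hz₁'' : ∀ t, HasDerivAt z₁' (-2 * z₁ t + 2 * z₁ t ^ 3) t)
    (hz₂'' : ∀ t, HasDerivAt z₂' (-2 * z₂ t + 2 * z₂ t ^ 3) t)
    (h10 : z₁ 0 = 0) (h20 : z₂ 0 = 0)
    (hd1 : 0 < z₁' 0) (hd12 : z₁' 0 < z₂' 0)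
    (hpos : ∀ t ∈ Set.Ioo (0:ℝ) (L / 2), 0 < z₁ t)
    (hhalf : z₁ (L / 2) = 0)
    (hneg : ∀ t ∈ Set.Ioo (L / 2) L, z₁ t < 0) :
    Set.Subsingleton {t | t ∈ Set.Ioo (0:ℝ) L ∧ z₁ t = z₂ t} := by
  have h₁ : IsDuffingSolution z₁ z₁' := ⟨hz₁, hz₁''⟩
  have h₂ : IsDuffingSolution z₂ z₂' := ⟨hz₂, hz₂''⟩
  have htransversal (t : ℝ) (ht : z₁ t = z₂ t) : z₁' t ≠ z₂' t :=
    h₁.deriv_ne_of_eq h₂ (s := 0) (by simp only [duffingEnergy, h10, h20]; nlinarith) ht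
  intro x ⟨hx, hxc⟩ y ⟨hy, hyc⟩
  by_contra hne
  wlog hxy : x < y generalizing x y
  · exact this hy hyc hx hxc (Ne.symm hne) ((not_lt.1 hxy).lt_of_ne (Ne.symm hne))
  obtain ⟨a, ⟨ha, hax⟩, hcross_a, hbelow, hslope_a⟩ :=
    exists_first_zero_of_hasDerivAt (f := fun t => z₂ t - z₁ t) (fun t => (hz₂ t).sub (hz₁ t))
      (by simp [h10, h20]) (by linarith) hx.1 (by simp [hxc])
  replace hcross_a : z₁ a = z₂ a := (sub_eq_zero.1 hcross_a).symm
  replace hslope_a : z₂' a < z₁' a :=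
    (sub_nonpos.1 hslope_a).lt_of_ne (htransversal a hcross_a).symm
  have hLa : L / 2 < a := h₁.lt_of_first_crossing h₂ h10 h20 hpos hhalf ha hcross_a
    (fun t ht => sub_pos.1 (hbelow t ht)) hslope_a
  obtain ⟨b, ⟨hab, hby⟩, hcross_b, habove, hslope_b⟩ :=
    exists_first_zero_of_hasDerivAt (f := fun t => z₁ t - z₂ t) (fun t => (hz₁ t).sub (hz₂ t))
      (by simp [hcross_a]) (by linarith) (hax.trans_lt hxy) (by simp [hyc])
  have hslope_b' : z₂' b < z₁' b := h₁.deriv_lt_of_crossings_of_neg h₂ hab hcross_a (sub_eq_zero.1 hcross_b)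
    (fun t ht => hneg t ⟨hLa.trans_le ht.1, ht.2.trans_lt (hby.trans_lt hy.2)⟩)
    (fun t ht => sub_pos.1 (habove t ht)) hslope_a
  linarith

theorem z_solutions_cross_at_most_once
    (L : ℝ) (hL : 0 < L) (z₁ z₂ z₁' z₂' : ℝ → ℝ)
    (hz₁ : ∀ t, HasDerivAt z₁ (z₁' t) t)
    (hz₂ : ∀ t, HasDerivAt z₂ (z₂' t) t)
    (hz₁'' : ∀ t, HasDerivAt z₁' (-2 * z₁ t + 2 * z₁ t ^ 3) t)
    (hz₂'' : ∀ t, HasDerivAt z₂' (-2 * z₂ t + 2 * z₂ t ^ 3) t)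
    (h10 : z₁ 0 = 0) (h20 : z₂ 0 = 0)
    (hd1 : 0 < z₁' 0) (hd12 : z₁' 0 < z₂' 0)
    (hpos : ∀ t ∈ Set.Ioo (0:ℝ) (L / 2), 0 < z₁ t)
    (hhalf : z₁ (L / 2) = 0)
    (hneg : ∀ t ∈ Set.Ioo (L / 2) L, z₁ t < 0) :
    Set.Subsingleton {t | t ∈ Set.Ioo (0:ℝ) L ∧ z₁ t = z₂ t} :=
  z_solutions_cross_at_most_once_general L z₁ z₂ z₁' z₂' hz₁ hz₂ hz₁'' hz₂'' h10 h20 hd1 hd12 hpos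
    hhalf hneg
end

section
/- Let c : [0,1] → ℝ be continuous with −2 ≤ c(t) ≤ 4 for all t ∈ [0,1], and let φ : [0,1] → ℝ be twice differentiable with φ'' = c·φ, φ(0) = 1, and φ'(0) = 0. Then for all t ∈ [0,1], cos(√2 · t) ≤ φ(t) ≤ cosh(2t). -/
/-!
Sturm comparison through the Wronskian: if `u'' = p u`, `v'' = q v` with `q ≤ p`, `u ≥ 0`,
`v > 0` and equal initial data, then `W = u' v - u v'` vanishes initially and
`W' = (p - q) u v ≥ 0`, so `(u / v)' = W / v² ≥ 0` and `v ≤ u`.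
Comparing `φ` with `cos (√2 t)` needs `φ ≥ 0`; up to the first zero of `φ` the comparison gives
`φ ≥ cos (√2 t) > 0`, so `φ` has no zero in `[0, 1]`. Then comparing `cosh (2 t)` with `φ > 0`
gives the upper bound.
-/

open Set Real

theorem monotoneOn_of_forall_hasDerivWithinAt_nonneg {D : Set ℝ} (hD : Convex ℝ D)
    {f f' : ℝ → ℝ} (hf : ∀ t ∈ D, HasDerivWithinAt f (f' t) D t) (hf' : ∀ t ∈ D, 0 ≤ f' t) :
    MonotoneOn f D :=
  monotoneOn_of_hasDerivWithinAt_nonneg hD (fun t ht => (hf t ht).continuousWithinAt)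
    (fun t ht => (hf t (interior_subset ht)).mono interior_subset)
    (fun t ht => hf' t (interior_subset ht))

theorem ContinuousOn.forall_pos_of_nonneg_imp_pos {f : ℝ → ℝ} {a b : ℝ}
    (hf : ContinuousOn f (Icc a b)) (ha : 0 < f a)
    (h : ∀ x ∈ Icc a b, (∀ t ∈ Icc a x, 0 ≤ f t) → 0 < f x) :
    ∀ x ∈ Icc a b, 0 < f x := by
  by_contra! ⟨x₀, hx₀, hfx₀⟩
  obtain ⟨m, ⟨hmI, hfm⟩, hmin⟩ : ∃ m, IsLeast (Icc a b ∩ f ⁻¹' Iic 0) m :=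
    ⟨_, (hf.preimage_isClosed_of_isClosed isClosed_Icc isClosed_Iic).isLeast_csInf
      ⟨x₀, hx₀, hfx₀⟩ ⟨a, fun t ht => ht.1.1⟩⟩
  have hpos : ∀ t ∈ Ico a m, 0 < f t := fun t ht => by
    by_contra! hft
    exact (hmin ⟨⟨ht.1, ht.2.le.trans hmI.2⟩, hft⟩).not_gt ht.2
  have ham : a ≠ m := by
    rintro rfl
    exact (hfm : f a ≤ 0).not_gt ha
  have hsub : Icc a m ⊆ Icc a b := Icc_subset_Icc_right hmI.2
  have hnonneg : ∀ t ∈ Icc a m, 0 ≤ f t := by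
    intro t ht
    rw [← closure_Ico ham] at ht
    exact ContinuousWithinAt.closure_le ht continuousWithinAt_const
      ((hf t (hsub (closure_minimal Ico_subset_Icc_self isClosed_Icc ht))).mono
        (Ico_subset_Icc_self.trans hsub))
      fun s hs => (hpos s hs).le
  exact (hfm : f m ≤ 0).not_gt (h m hmI hnonneg)

section Sturm

variable {a b : ℝ} {u u' v v' p q : ℝ → ℝ}

theorem monotoneOn_div_of_wronskian_nonneg
    (hu : ∀ t ∈ Icc a b, HasDerivWithinAt u (u' t) (Icc a b) t)
    (hv : ∀ t ∈ Icc a b, HasDerivWithinAt v (v' t) (Icc a b) t)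
    (hv0 : ∀ t ∈ Icc a b, v t ≠ 0) (hW : ∀ t ∈ Icc a b, 0 ≤ u' t * v t - u t * v' t) :
    MonotoneOn (fun t => u t / v t) (Icc a b) :=
  monotoneOn_of_forall_hasDerivWithinAt_nonneg (convex_Icc a b)
    (fun t ht => (hu t ht).div (hv t ht) (hv0 t ht))
    (fun t ht => div_nonneg (hW t ht) (sq_nonneg _))

theorem le_of_sturm_comparison
    (hu : ∀ t ∈ Icc a b, HasDerivWithinAt u (u' t) (Icc a b) t)
    (hu' : ∀ t ∈ Icc a b, HasDerivWithinAt u' (p t * u t) (Icc a b) t)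
    (hv : ∀ t ∈ Icc a b, HasDerivWithinAt v (v' t) (Icc a b) t)
    (hv' : ∀ t ∈ Icc a b, HasDerivWithinAt v' (q t * v t) (Icc a b) t)
    (hqp : ∀ t ∈ Icc a b, q t ≤ p t) (hu0 : ∀ t ∈ Icc a b, 0 ≤ u t)
    (hv0 : ∀ t ∈ Icc a b, 0 < v t) (ha : u a = v a) (ha' : u' a = v' a) :
    ∀ t ∈ Icc a b, v t ≤ u t := by
  intro t ht
  have hab : a ∈ Icc a b := ⟨le_rfl, ht.1.trans ht.2⟩
  have hW : MonotoneOn (fun t => u' t * v t - u t * v' t) (Icc a b) := by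
    refine monotoneOn_of_forall_hasDerivWithinAt_nonneg (convex_Icc a b)
      (f' := fun t => (p t - q t) * u t * v t) (fun s hs => ?_) (fun s hs => ?_)
    · exact (((hu' s hs).mul (hv s hs)).sub ((hu s hs).mul (hv' s hs))).congr_deriv (by ring)
    · exact mul_nonneg (mul_nonneg (sub_nonneg.2 (hqp s hs)) (hu0 s hs)) (hv0 s hs).le
  have hW0 : ∀ s ∈ Icc a b, 0 ≤ u' s * v s - u s * v' s := fun s hs => by
    have h : u' a * v a - u a * v' a ≤ u' s * v s - u s * v' s := hW hab hs hs.1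
    rwa [ha, ha', mul_comm, sub_self] at h
  have hratio := monotoneOn_div_of_wronskian_nonneg hu hv (fun s hs => (hv0 s hs).ne') hW0
    hab ht ht.1
  dsimp only at hratio
  rwa [ha, div_self (hv0 a hab).ne', le_div_iff₀ (hv0 t ht), one_mul] at hratio

end Sturm

theorem hasDerivAt_cos_mul (k t : ℝ) :
    HasDerivAt (fun t => cos (k * t)) (-k * sin (k * t)) t := by
  simpa [mul_comm] using ((hasDerivAt_id t).const_mul k).cos

theorem hasDerivAt_neg_mul_sin_mul (k t : ℝ) :
    HasDerivAt (fun t => -k * sin (k * t)) (-k ^ 2 * cos (k * t)) t :=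
  (((hasDerivAt_id' t).const_mul k).sin.const_mul (-k)).congr_deriv (by ring)

theorem hasDerivAt_cosh_mul (k t : ℝ) :
    HasDerivAt (fun t => cosh (k * t)) (k * sinh (k * t)) t := by
  simpa [mul_comm] using ((hasDerivAt_id t).const_mul k).cosh

theorem hasDerivAt_mul_sinh_mul (k t : ℝ) :
    HasDerivAt (fun t => k * sinh (k * t)) (k ^ 2 * cosh (k * t)) t :=
  (((hasDerivAt_id' t).const_mul k).sinh.const_mul k).congr_deriv (by ring)

theorem cos_sqrt_two_mul_pos {t : ℝ} (ht : t ∈ Icc (0 : ℝ) 1) : 0 < cos (√2 * t) := by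
  have h2 : √2 * t ≤ √2 := mul_le_of_le_one_right (sqrt_nonneg 2) ht.2
  apply cos_pos_of_mem_Ioo
  constructor <;> nlinarith [pi_gt_three, sqrt_two_lt_three_halves, sqrt_nonneg 2, ht.1]

theorem comparison_cos_cosh_general
    (c φ φ' : ℝ → ℝ)
    (hcb : ∀ t ∈ Set.Icc (0:ℝ) 1, -2 ≤ c t ∧ c t ≤ 4)
    (hφ : ∀ t ∈ Set.Icc (0:ℝ) 1, HasDerivWithinAt φ (φ' t) (Set.Icc 0 1) t)
    (hφ'' : ∀ t ∈ Set.Icc (0:ℝ) 1, HasDerivWithinAt φ' (c t * φ t) (Set.Icc 0 1) t)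
    (h0 : φ 0 = 1) (h0' : φ' 0 = 0) :
    ∀ t ∈ Set.Icc (0:ℝ) 1,
      Real.cos (Real.sqrt 2 * t) ≤ φ t ∧ φ t ≤ Real.cosh (2 * t) := by
  have lower : ∀ x ∈ Icc (0 : ℝ) 1, (∀ t ∈ Icc 0 x, 0 ≤ φ t) →
      ∀ t ∈ Icc 0 x, cos (√2 * t) ≤ φ t := by
    intro x hx hφ0
    have hsub : Icc 0 x ⊆ Icc 0 1 := Icc_subset_Icc_right hx.2
    refine le_of_sturm_comparison (q := fun _ => -√2 ^ 2)
      (fun t ht => (hφ t (hsub ht)).mono hsub) (fun t ht => (hφ'' t (hsub ht)).mono hsub)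
      (fun t _ => (hasDerivAt_cos_mul _ t).hasDerivWithinAt)
      (fun t _ => (hasDerivAt_neg_mul_sin_mul _ t).hasDerivWithinAt)
      (fun t ht => ?_) hφ0 (fun t ht => cos_sqrt_two_mul_pos (hsub ht)) (by simp [h0])
      (by simp [h0'])
    rw [sq_sqrt zero_le_two]
    exact (hcb t (hsub ht)).1
  have hpos : ∀ t ∈ Icc (0 : ℝ) 1, 0 < φ t :=
    ContinuousOn.forall_pos_of_nonneg_imp_pos (fun t ht => (hφ t ht).continuousWithinAt)
      (by simp [h0]) fun x hx hφ0 =>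
        (cos_sqrt_two_mul_pos hx).trans_le (lower x hx hφ0 x (right_mem_Icc.2 hx.1))
  have upper : ∀ t ∈ Icc (0 : ℝ) 1, φ t ≤ cosh (2 * t) :=
    le_of_sturm_comparison (p := fun _ => 2 ^ 2)
      (fun t _ => (hasDerivAt_cosh_mul 2 t).hasDerivWithinAt)
      (fun t _ => (hasDerivAt_mul_sinh_mul 2 t).hasDerivWithinAt) hφ hφ''
      (fun t ht => by norm_num [(hcb t ht).2]) (fun t _ => (cosh_pos _).le) hpos
      (by simp [h0]) (by simp [h0'])
  exact fun t ht => ⟨lower 1 (right_mem_Icc.2 zero_le_one) (fun s hs => (hpos s hs).le) t ht,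
    upper t ht⟩

theorem comparison_cos_cosh
    (c φ φ' : ℝ → ℝ)
    (hc : ContinuousOn c (Set.Icc 0 1))
    (hcb : ∀ t ∈ Set.Icc (0:ℝ) 1, -2 ≤ c t ∧ c t ≤ 4)
    (hφ : ∀ t ∈ Set.Icc (0:ℝ) 1, HasDerivWithinAt φ (φ' t) (Set.Icc 0 1) t)
    (hφ'' : ∀ t ∈ Set.Icc (0:ℝ) 1, HasDerivWithinAt φ' (c t * φ t) (Set.Icc 0 1) t)
    (h0 : φ 0 = 1) (h0' : φ' 0 = 0) :
    ∀ t ∈ Set.Icc (0:ℝ) 1,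
      Real.cos (Real.sqrt 2 * t) ≤ φ t ∧ φ t ≤ Real.cosh (2 * t) :=
  comparison_cos_cosh_general c φ φ' hcb hφ hφ'' h0 h0'
end

section
/- Let K, C > 0 with K ≤ C³. Then the 2-dimensional Lebesgue measure of the planar region {(x, y) ∈ ℝ² : 0 ≤ x ≤ C, 0 ≤ y ≤ C, min(x·y², x²·y) ≤ K} is at most K^{2/3} + 4·√(K·C). -/
/-!
Cut the square at `s = √(K / C)`. A point with one coordinate at most `s` lies in one of the two
`s × C` strips, each of area `s C = √(K C)`. Otherwise, if say `x² y ≤ K`, it lies under the graph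
of `y = K / x²` to the right of `x = s`, a region of area `∫_s^∞ K / x² = K / s = √(K C)`.
The four pieces give the sharper bound `4 √(K C)`.
-/

open MeasureTheory Set

theorem prod_volume_region_between_cc_eq_lintegral {α : Type*} [MeasurableSpace α]
    (μ : Measure α) [SFinite μ] {f g : α → ℝ} {s : Set α}
    (hf : Measurable f) (hg : Measurable g) (hs : MeasurableSet s) :
    μ.prod volume {p : α × ℝ | p.1 ∈ s ∧ p.2 ∈ Icc (f p.1) (g p.1)} =
      ∫⁻ x in s, ENNReal.ofReal (g x - f x) ∂μ := by
  classical
  rw [Measure.prod_apply (measurableSet_region_between_cc hf hg hs), ← lintegral_indicator hs]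
  congr 1 with x
  by_cases hx : x ∈ s
  · simp only [preimage_ofPred_eq, hx, true_and, indicator_of_mem]
    exact Real.volume_Icc
  · simp [hx]

theorem lintegral_Ici_ofReal_div_sq {a M : ℝ} (ha : 0 < a) (hM : 0 ≤ M) :
    ∫⁻ x in Ici a, ENNReal.ofReal (M / x ^ 2) = ENNReal.ofReal (M / a) := by
  have h_rpow : EqOn (fun x : ℝ => M / x ^ 2) (fun x => M * x ^ (-2 : ℝ)) (Ioi a) := by
    intro x hx
    simp [Real.rpow_neg (ha.trans hx).le, div_eq_mul_inv]
  have h_int : IntegrableOn (fun x : ℝ => M * x ^ (-2 : ℝ)) (Ioi a) :=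
    (integrableOn_Ioi_rpow_of_lt (by norm_num) ha).const_mul M
  have h_nonneg : 0 ≤ᵐ[volume.restrict (Ioi a)] fun x : ℝ => M * x ^ (-2 : ℝ) :=
    ae_restrict_of_forall_mem measurableSet_Ioi fun x hx =>
      mul_nonneg hM (Real.rpow_nonneg (ha.trans hx).le _)
  rw [setLIntegral_congr Ioi_ae_eq_Ici.symm,
    setLIntegral_congr_fun measurableSet_Ioi fun x hx => congrArg ENNReal.ofReal (h_rpow hx),
    ← ofReal_integral_eq_lintegral_ofReal h_int h_nonneg, integral_const_mul,
    integral_Ioi_rpow_of_lt (by norm_num) ha]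
  norm_num [Real.rpow_neg_one, div_eq_mul_inv]

def underInvSq (a M : ℝ) : Set (ℝ × ℝ) := {p | p.1 ∈ Ici a ∧ p.2 ∈ Icc 0 (M / p.1 ^ 2)}

theorem volume_underInvSq {a M : ℝ} (ha : 0 < a) (hM : 0 ≤ M) :
    volume (underInvSq a M) = ENNReal.ofReal (M / a) := by
  rw [Measure.volume_eq_prod, underInvSq,
    prod_volume_region_between_cc_eq_lintegral volume (f := fun _ => 0) (g := fun x => M / x ^ 2)
      measurable_const (by fun_prop) measurableSet_Ici]
  simpa using lintegral_Ici_ofReal_div_sq ha hM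

theorem volume_preimage_swap (t : Set (ℝ × ℝ)) : volume (Prod.swap ⁻¹' t) = volume t := by
  rw [Measure.volume_eq_prod]
  exact (Measure.measurePreserving_swap (μ := volume) (ν := volume)).measure_preimage_equiv
    (f := MeasurableEquiv.prodComm) t

theorem subset_strips_union_underInvSq {K C s : ℝ} (hs : 0 < s) :
    {p : ℝ × ℝ | 0 ≤ p.1 ∧ p.1 ≤ C ∧ 0 ≤ p.2 ∧ p.2 ≤ C ∧
        min (p.1 * p.2 ^ 2) (p.1 ^ 2 * p.2) ≤ K} ⊆
      (Icc 0 s ×ˢ Icc 0 C ∪ Icc 0 C ×ˢ Icc 0 s) ∪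
        (underInvSq s K ∪ Prod.swap ⁻¹' underInvSq s K) := by
  rintro ⟨x, y⟩ ⟨hx0, hxC, hy0, hyC, hmin⟩
  rcases min_le_iff.1 hmin with h | h
  · rcases le_or_gt y s with hy | hy
    · exact Or.inl (Or.inr ⟨⟨hx0, hxC⟩, hy0, hy⟩)
    · refine Or.inr (Or.inr ⟨hy.le, hx0, ?_⟩)
      change x ≤ K / y ^ 2
      rw [le_div_iff₀ (pow_pos (hs.trans hy) 2)]
      exact h
  · rcases le_or_gt x s with hx | hx
    · exact Or.inl (Or.inl ⟨⟨hx0, hx⟩, hy0, hyC⟩)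
    · refine Or.inr (Or.inl ⟨hx.le, hy0, ?_⟩)
      change y ≤ K / x ^ 2
      rw [le_div_iff₀ (pow_pos (hs.trans hx) 2)]
      linarith

theorem volume_Icc_prod_Icc (a b : ℝ) (ha : 0 ≤ a) :
    volume (Icc 0 a ×ˢ Icc 0 b) = ENNReal.ofReal (a * b) := by
  rw [Measure.volume_eq_prod, Measure.prod_prod, Real.volume_Icc, Real.volume_Icc,
    ← ENNReal.ofReal_mul (by simpa), sub_zero, sub_zero]

theorem planar_region_area_bound_general (K C : ℝ) (hK : 0 < K) (hC : 0 < C) :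
    volume {p : ℝ × ℝ | 0 ≤ p.1 ∧ p.1 ≤ C ∧ 0 ≤ p.2 ∧ p.2 ≤ C ∧
        min (p.1 * p.2 ^ 2) (p.1 ^ 2 * p.2) ≤ K} ≤
      ENNReal.ofReal (K ^ ((2:ℝ) / 3) + 4 * Real.sqrt (K * C)) := by
  set s := Real.sqrt (K / C)
  have hs : 0 < s := Real.sqrt_pos.2 (div_pos hK hC)
  have h_strip : s * C = Real.sqrt (K * C) := by
    rw [← Real.sqrt_sq hC.le, ← Real.sqrt_mul (div_pos hK hC).le, Real.sqrt_sq hC.le]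
    field_simp
  have h_tail : K / s = Real.sqrt (K * C) := by
    have h_sq : s * s = K / C := Real.mul_self_sqrt (div_pos hK hC).le
    rw [← h_strip, div_eq_iff hs.ne']
    field_simp at h_sq
    linear_combination -h_sq
  set A := ENNReal.ofReal (Real.sqrt (K * C))
  calc _ ≤ volume ((Icc 0 s ×ˢ Icc 0 C ∪ Icc 0 C ×ˢ Icc 0 s) ∪
        (underInvSq s K ∪ Prod.swap ⁻¹' underInvSq s K)) :=
        measure_mono (subset_strips_union_underInvSq hs)
    _ ≤ (A + A) + (A + A) := by
        refine (measure_union_le _ _).trans (add_le_add ((measure_union_le _ _).trans ?_)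
          ((measure_union_le _ _).trans ?_))
        · rw [volume_Icc_prod_Icc s C hs.le, volume_Icc_prod_Icc C s hC.le, mul_comm C, h_strip]
        · rw [volume_preimage_swap, volume_underInvSq hs hK.le, h_tail]
    _ = ENNReal.ofReal (4 * Real.sqrt (K * C)) := by
        rw [ENNReal.ofReal_mul (by norm_num), ENNReal.ofReal_ofNat]
        ring
    _ ≤ _ := ENNReal.ofReal_le_ofReal (le_add_of_nonneg_left (by positivity))

theorem planar_region_area_bound (K C : ℝ) (hK : 0 < K) (hC : 0 < C) (hKC : K ≤ C ^ 3) :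
    volume {p : ℝ × ℝ | 0 ≤ p.1 ∧ p.1 ≤ C ∧ 0 ≤ p.2 ∧ p.2 ≤ C ∧
        min (p.1 * p.2 ^ 2) (p.1 ^ 2 * p.2) ≤ K} ≤
      ENNReal.ofReal (K ^ ((2:ℝ) / 3) + 4 * Real.sqrt (K * C)) :=
  planar_region_area_bound_general K C hK hC
end
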